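/- arXiv:2307.01347 — 6 statements merged into one kernel-verified Lean document; each statement's English description precedes it below -/
import Mathlib

section
/- Fix ℓ⁺, ℓ⁻ ≥ 0. Then exactly one of the following three alternatives holds: τ_{ℓ⁺}⁺ < τ_{ℓ⁻}⁻, or τ_{ℓ⁻}⁻ < τ_{ℓ⁺}⁺, or τ_{ℓ⁺}⁺ = τ_{ℓ⁻}⁻ = ∞. In particular, if at least one of τ_{ℓ⁺}⁺ and τ_{ℓ⁻}⁻ is finite, then τ_{ℓ⁺}⁺ ≠ τ_{ℓ⁻}⁻. -/
open MeasureTheory Set Filter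
open scoped ENNReal

noncomputable section

/-- The extended state space `Ē = E ∪ {∂}`, with `none` playing the role of the coffin state. -/
instance optionMeasurableSpace {E : Type*} : MeasurableSpace (Option E) := ⊤

/-- The canonical path space: `Ē`-valued functions of time. -/
abbrev CPath (E : Type*) := ℝ → Option E

/-- The state of the path at an extended time, with `X_∞ := ∂`. -/
def Xat {E : Type*} (t : ℝ≥0∞) (ω : CPath E) : Option E :=
  if t = ∞ then none else ω t.toReal

/-- The additive functional `φ_t(s) = ∫_s^t v(X_u) du`. -/
def phi {E : Type*} (v : Option E → ℝ) (s t : ℝ) (ω : CPath E) : ℝ :=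
  ∫ u in s..t, v (ω u)

/-- The first passage time `τ_ℓ⁺(s) = inf {t ∈ [s,∞] : φ_t(s) > ℓ}` (with `inf ∅ = ∞`). -/
def tauP {E : Type*} (v : Option E → ℝ) (s ℓ : ℝ) (ω : CPath E) : ℝ≥0∞ :=
  sInf {t : ℝ≥0∞ | ∃ u : ℝ, s ≤ u ∧ t = ENNReal.ofReal u ∧ ℓ < phi v s u ω}

/-- The first passage time `τ_ℓ⁻(s) = inf {t ∈ [s,∞] : φ_t(s) < -ℓ}` (with `inf ∅ = ∞`). -/
def tauM {E : Type*} (v : Option E → ℝ) (s ℓ : ℝ) (ω : CPath E) : ℝ≥0∞ :=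
  sInf {t : ℝ≥0∞ | ∃ u : ℝ, s ≤ u ∧ t = ENNReal.ofReal u ∧ phi v s u ω < -ℓ}

/-- `ξ⁺_{ℓ⁻,ℓ⁺}(s)`: equals `τ_{ℓ⁺}⁺(s)` if it is strictly smaller than `τ_{ℓ⁻}⁻(s)`, else `∞`. -/
def xiP {E : Type*} (v : Option E → ℝ) (ℓm ℓp s : ℝ) (ω : CPath E) : ℝ≥0∞ :=
  if tauP v s ℓp ω < tauM v s ℓm ω then tauP v s ℓp ω else ∞

/-- `ξ⁻_{ℓ⁻,ℓ⁺}(s)`: equals `τ_{ℓ⁻}⁻(s)` if it is strictly smaller than `τ_{ℓ⁺}⁺(s)`, else `∞`. -/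
def xiM {E : Type*} (v : Option E → ℝ) (ℓm ℓp s : ℝ) (ω : CPath E) : ℝ≥0∞ :=
  if tauM v s ℓm ω < tauP v s ℓp ω then tauM v s ℓm ω else ∞

/-- Membership in `B_b(X̄₊)`: bounded measurable functions on
`X̄₊ = (ℝ₊ × E₊) ∪ {(∞,∂)}` vanishing at `(∞,∂)`, encoded as functions on
`[0,∞] × Ē` vanishing off `ℝ₊ × E₊` (in particular at `(∞,∂)`). -/
def MemBbP {E : Type*} (v : Option E → ℝ) (g : ℝ≥0∞ → Option E → ℝ) : Prop :=
  (∀ j, Measurable fun t => g t j) ∧ (∃ C, ∀ t j, |g t j| ≤ C) ∧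
    (∀ t, g t none = 0) ∧
    (∀ (t : ℝ≥0∞) (e : E), ¬(0 < v (some e) ∧ t ≠ ∞) → g t (some e) = 0)

/-- Membership in `B_b(X̄₋)`. -/
def MemBbM {E : Type*} (v : Option E → ℝ) (g : ℝ≥0∞ → Option E → ℝ) : Prop :=
  (∀ j, Measurable fun t => g t j) ∧ (∃ C, ∀ t j, |g t j| ≤ C) ∧
    (∀ t, g t none = 0) ∧
    (∀ (t : ℝ≥0∞) (e : E), ¬(v (some e) < 0 ∧ t ≠ ∞) → g t (some e) = 0)

/-- `g` decays exponentially fast to zero: `|g(s,i)| ≤ C e^{-c s}` for some `C, c > 0`. -/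
def DecaysExp {E : Type*} (g : ℝ≥0∞ → Option E → ℝ) : Prop :=
  ∃ C c : ℝ, 0 < C ∧ 0 < c ∧
    ∀ (t : ℝ≥0∞) (j : Option E), t ≠ ∞ → |g t j| ≤ C * Real.exp (-c * t.toReal)

/-- Generic expectation operator `(s,i) ↦ 𝔼_{s,i}[g(σ(s), X_{σ(s)})]` associated with a family of
random times `σ(s)`, as an operator on functions of `(t,j) ∈ [0,∞] × Ē` (value `0` at `t = ∞`). -/
def applyAt {E : Type*} (P : ℝ → Option E → Measure (CPath E)) (σ : ℝ → CPath E → ℝ≥0∞)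
    (g : ℝ≥0∞ → Option E → ℝ) : ℝ≥0∞ → Option E → ℝ :=
  fun t j =>
    if t = ∞ then 0
    else ∫ ω, g (σ t.toReal ω) (Xat (σ t.toReal ω) ω) ∂ P t.toReal j

/-- Restriction of a function on `[0,∞] × Ē` to `X̄₊` (zero off `ℝ₊ × E₊`). -/
def restrP {E : Type*} (v : Option E → ℝ) (g : ℝ≥0∞ → Option E → ℝ) :
    ℝ≥0∞ → Option E → ℝ :=
  fun t j =>
    match j with
    | none => 0
    | some e => if 0 < v (some e) ∧ t ≠ ∞ then g t (some e) else 0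

/-- Restriction of a function on `[0,∞] × Ē` to `X̄₋` (zero off `ℝ₊ × E₋`). -/
def restrM {E : Type*} (v : Option E → ℝ) (g : ℝ≥0∞ → Option E → ℝ) :
    ℝ≥0∞ → Option E → ℝ :=
  fun t j =>
    match j with
    | none => 0
    | some e => if v (some e) < 0 ∧ t ≠ ∞ then g t (some e) else 0

/-- The operator `𝒫_ℓ⁺ : B_b(X̄₊) → B_b(X̄₊)`, `(𝒫_ℓ⁺ g)(s,i) = 𝔼_{s,i}[g(τ_ℓ⁺(s), X_{τ_ℓ⁺(s)})]`. -/
def opP {E : Type*} (P : ℝ → Option E → Measure (CPath E)) (v : Option E → ℝ) (ℓ : ℝ)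
    (g : ℝ≥0∞ → Option E → ℝ) : ℝ≥0∞ → Option E → ℝ :=
  restrP v (applyAt P (fun s => tauP v s ℓ) g)

/-- The operator `J⁺ : B_b(X̄₊) → B_b(X̄₋)`, `(J⁺ g)(s,i) = 𝔼_{s,i}[g(τ₀⁺(s), X_{τ₀⁺(s)})]`. -/
def opJP {E : Type*} (P : ℝ → Option E → Measure (CPath E)) (v : Option E → ℝ)
    (g : ℝ≥0∞ → Option E → ℝ) : ℝ≥0∞ → Option E → ℝ :=
  restrM v (applyAt P (fun s => tauP v s 0) g)

/-- The operator `𝒫_ℓ⁻ : B_b(X̄₋) → B_b(X̄₋)`. -/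
def opM {E : Type*} (P : ℝ → Option E → Measure (CPath E)) (v : Option E → ℝ) (ℓ : ℝ)
    (g : ℝ≥0∞ → Option E → ℝ) : ℝ≥0∞ → Option E → ℝ :=
  restrM v (applyAt P (fun s => tauM v s ℓ) g)

/-- The operator `J⁻ : B_b(X̄₋) → B_b(X̄₊)`. -/
def opJM {E : Type*} (P : ℝ → Option E → Measure (CPath E)) (v : Option E → ℝ)
    (g : ℝ≥0∞ → Option E → ℝ) : ℝ≥0∞ → Option E → ℝ :=
  restrP v (applyAt P (fun s => tauM v s 0) g)

/-- The operator `Ξ⁺_{ℓ⁻,ℓ⁺}`, `(Ξ⁺ g)(s,i) = 𝔼_{s,i}[g(ξ⁺_{ℓ⁻,ℓ⁺}(s), X_{ξ⁺_{ℓ⁻,ℓ⁺}(s)})]`. -/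
def opXiP {E : Type*} (P : ℝ → Option E → Measure (CPath E)) (v : Option E → ℝ) (ℓm ℓp : ℝ)
    (g : ℝ≥0∞ → Option E → ℝ) (s : ℝ) (j : Option E) : ℝ :=
  ∫ ω, g (xiP v ℓm ℓp s ω) (Xat (xiP v ℓm ℓp s ω) ω) ∂ P s j

/-- The operator `Ξ⁻_{ℓ⁻,ℓ⁺}`. -/
def opXiM {E : Type*} (P : ℝ → Option E → Measure (CPath E)) (v : Option E → ℝ) (ℓm ℓp : ℝ)
    (g : ℝ≥0∞ → Option E → ℝ) (s : ℝ) (j : Option E) : ℝ :=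
  ∫ ω, g (xiM v ℓm ℓp s ω) (Xat (xiM v ℓm ℓp s ω) ω) ∂ P s j

/-- The raw σ-field `σ(X_u, u ∈ [s,r])` on path space. -/
def natF {E : Type*} (s r : ℝ) : MeasurableSpace (CPath E) :=
  ⨆ u ∈ Set.Icc s r, MeasurableSpace.comap (fun ω : CPath E => ω u) ⊤

/-- The right-continuous filtration `F^s_t = ⋂_{r > t} σ(X_u, u ∈ [s,r])`,
indexed by extended times, with `F^s_∞ = σ(X_u, u ≥ s)`. -/
def Fst {E : Type*} (s : ℝ) (t : ℝ≥0∞) : MeasurableSpace (CPath E) :=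
  if t = ∞ then ⨆ u ∈ Set.Ici s, MeasurableSpace.comap (fun ω : CPath E => ω u) ⊤
  else ⨅ r ∈ Set.Ioi t.toReal, natF s r

/-- `τ` is an `𝔽ₛ`-stopping time. -/
def IsST {E : Type*} (s : ℝ) (τ : CPath E → ℝ≥0∞) : Prop :=
  ∀ t : ℝ≥0∞, MeasurableSet[Fst s t] {ω | τ ω ≤ t}

/-- The σ-field `F^s_τ` at an `𝔽ₛ`-stopping time `τ`. -/
def stoppedSigma {E : Type*} (s : ℝ) (τ : CPath E → ℝ≥0∞) (hτ : IsST s τ) :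
    MeasurableSpace (CPath E) where
  MeasurableSet' A := ∀ t : ℝ≥0∞, MeasurableSet[Fst s t] (A ∩ {ω | τ ω ≤ t})
  measurableSet_empty := fun t => by
    simpa using (MeasurableSet.empty : MeasurableSet[Fst s t] (∅ : Set (CPath E)))
  measurableSet_compl := fun A hA t => by
    have h1 : Aᶜ ∩ {ω | τ ω ≤ t} = {ω | τ ω ≤ t} \ (A ∩ {ω | τ ω ≤ t}) := by
      ext ω
      simp only [Set.mem_inter_iff, Set.mem_compl_iff, Set.mem_diff, Set.mem_setOf_eq]
      tauto
    rw [h1]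
    exact MeasurableSet.diff (hτ t) (hA t)
  measurableSet_iUnion := fun f hf t => by
    rw [Set.iUnion_inter]
    exact MeasurableSet.iUnion fun n => hf n t

/-- A canonical time-inhomogeneous Markov family on `Ē`, with right-continuous sample paths,
absorbing coffin state, initial condition `ℙ_{s,i}(X_s = i) = 1` and the strong Markov property
with respect to the right-continuous filtrations `𝔽ₛ`. -/
structure MarkovFamily (E : Type*) (v : Option E → ℝ) where
  /-- The family of probability measures `ℙ_{s,i}` on canonical path space. -/
  P : ℝ → Option E → Measure (CPath E)
  prob : ∀ s j, IsProbabilityMeasure (P s j)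
  init : ∀ (s : ℝ) (j : Option E), 0 ≤ s → P s j {ω | ω s = j} = 1
  pathReg : ∀ (s : ℝ) (j : Option E), 0 ≤ s → ∀ᵐ ω ∂ P s j,
    (∀ t, s ≤ t → ∃ ε > 0, ∀ u ∈ Set.Ico t (t + ε), ω u = ω t) ∧
    (∀ t, s ≤ t → ω t = none → ∀ u, t ≤ u → ω u = none)
  strongMarkov : ∀ (s : ℝ) (j : Option E), 0 ≤ s →
    ∀ (τ : CPath E → ℝ≥0∞) (hτ : IsST s τ), (∀ ω, ENNReal.ofReal s ≤ τ ω) →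
    ∀ G : ℝ≥0∞ → CPath E → ℝ, Measurable (Function.uncurry G) →
      (∃ C, ∀ t ω, |G t ω| ≤ C) →
      (∀ (t : ℝ) (ω ω' : CPath E), (∀ u, t ≤ u → ω u = ω' u) →
        G (ENNReal.ofReal t) ω = G (ENNReal.ofReal t) ω') →
      (P s j)[fun ω => Set.indicator {ω' : CPath E | τ ω' ≠ ∞}
          (fun ω' => G (τ ω') ω') ω | stoppedSigma s τ hτ]
        =ᵐ[P s j]
      fun ω => Set.indicator {ω' : CPath E | τ ω' ≠ ∞}
          (fun ω' => ∫ ω'', G (τ ω') ω'' ∂ P (τ ω').toReal (ω' (τ ω').toReal)) ω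

/-- The first jump time `γ(s) = inf {t ≥ s : X_t ≠ X_s}`. -/
def gammaJump {E : Type*} (s : ℝ) (ω : CPath E) : ℝ≥0∞ :=
  sInf {t : ℝ≥0∞ | ∃ u : ℝ, s ≤ u ∧ t = ENNReal.ofReal u ∧ ω u ≠ ω s}

/-- Assumption on the sub-Markovian generator matrices `(Λ_s)`: entries uniformly bounded by `K`,
nonnegative off-diagonal entries, nonpositive row sums, and the law of the first jump time is
`ℙ_{s,i}(γ(s) ≤ T) = 1 - exp(∫_s^T Λ_u(i,i) du)`. -/
structure GenAssumption (E : Type*) [Fintype E] (v : Option E → ℝ)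
    (M : MarkovFamily E v) (K : ℝ) where
  hK : 0 < K
  Lam : ℝ → E → E → ℝ
  bdd : ∀ s i j, |Lam s i j| ≤ K
  offDiag : ∀ s i j, i ≠ j → 0 ≤ Lam s i j
  rowSum : ∀ s i, ∑ j, Lam s i j ≤ 0
  jumpLaw : ∀ (s T : ℝ) (i : E), 0 ≤ s → s ≤ T →
    (M.P s (some i) {ω | gammaJump s ω ≤ ENNReal.ofReal T}).toReal
      = 1 - Real.exp (∫ u in s..T, Lam u i i)

end

section AuxLemmas

open Set

/-- A set of reals containing a right half-open interval around each of its points is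
measurable. -/
lemma measurableSet_of_right_nhds (A : Set ℝ)
    (h : ∀ t ∈ A, ∃ ε > 0, Set.Ico t (t + ε) ⊆ A) : MeasurableSet A := by
  classical
  have hsub : ∀ t, t ∈ A \ interior A → ∃ q : ℚ, t < (q : ℝ) ∧ Set.Ioo t (q : ℝ) ⊆ interior A := by
    intro t ht
    obtain ⟨ε, hε, hA⟩ := h t ht.1
    obtain ⟨q, hq1, hq2⟩ := exists_rat_btwn (show t < t + ε by linarith)
    refine ⟨q, hq1, fun x hx => ?_⟩
    have hIoo : Set.Ioo t (t + ε) ⊆ interior A :=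
      interior_maximal (fun y hy => hA ⟨hy.1.le, hy.2⟩) isOpen_Ioo
    exact hIoo ⟨hx.1, lt_trans hx.2 hq2⟩
  have hc : (A \ interior A).Countable := by
    choose f hf1 hf2 using hsub
    apply Set.countable_iff_exists_injective.mpr
    refine ⟨fun x => Encodable.encode (f x x.2), ?_⟩
    rintro ⟨a, ha⟩ ⟨b, hb⟩ hab
    have hq : f a ha = f b hb := Encodable.encode_injective hab
    apply Subtype.ext
    show a = b
    by_contra hne
    rcases lt_or_gt_of_ne hne with hlt | hlt
    · exact hb.2 (hf2 a ha ⟨hlt, by rw [hq]; exact hf1 b hb⟩)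
    · exact ha.2 (hf2 b hb ⟨hlt, by rw [← hq]; exact hf1 a ha⟩)
  rw [← Set.diff_union_of_subset (interior_subset : interior A ⊆ A)]
  exact hc.measurableSet.union isOpen_interior.measurableSet

/-- Key dichotomy: if the two first passage times coincide, they are both infinite. -/
lemma tau_key {E : Type*} [Fintype E] (v : Option E → ℝ) (s : ℝ) (hs : 0 ≤ s)
    (ω : CPath E)
    (hrc : ∀ t, s ≤ t → ∃ ε > 0, ∀ u ∈ Set.Ico t (t + ε), ω u = ω t)
    (ℓp ℓm : ℝ) (hℓp : 0 ≤ ℓp) (hℓm : 0 ≤ ℓm)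
    (heq : tauP v s ℓp ω = tauM v s ℓm ω) : tauP v s ℓp ω = ∞ := by
  classical
  by_contra hne
  set g : ℝ → ℝ := fun u => if s ≤ u then v (ω u) else 0 with hg
  -- measurability of level sets
  have hB : ∀ j : Option E, MeasurableSet {t : ℝ | s ≤ t ∧ ω t = j} := by
    intro j
    apply measurableSet_of_right_nhds
    rintro t ⟨hts, htj⟩
    obtain ⟨ε, hε, hconst⟩ := hrc t hts
    exact ⟨ε, hε, fun u hu => ⟨le_trans hts hu.1, (hconst u hu).trans htj⟩⟩
  have hgsum : g = fun u => ∑ j : Option E,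
      Set.indicator {t : ℝ | s ≤ t ∧ ω t = j} (fun _ => v j) u := by
    funext u
    by_cases hu : s ≤ u
    · rw [Finset.sum_eq_single (ω u)]
      · simp [hg, Set.indicator_of_mem (show u ∈ {t : ℝ | s ≤ t ∧ ω t = ω u} from ⟨hu, rfl⟩), hu]
      · intro j _ hj
        exact Set.indicator_of_notMem (fun h => hj h.2.symm) _
      · intro h; exact absurd (Finset.mem_univ _) h
    · simp only [hg, if_neg hu]
      symm
      apply Finset.sum_eq_zero
      intro j _
      exact Set.indicator_of_notMem (fun h => hu h.1) _
  have hgm : Measurable g := by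
    rw [hgsum]
    exact Finset.measurable_sum _ fun j _ => measurable_const.indicator (hB j)
  set C : ℝ := ∑ j : Option E, |v j| with hC
  have hC0 : 0 ≤ C := Finset.sum_nonneg fun j _ => abs_nonneg _
  have hgb : ∀ u, |g u| ≤ C := by
    intro u
    by_cases hu : s ≤ u
    · simp only [hg, if_pos hu]
      exact Finset.single_le_sum (fun j _ => abs_nonneg (v j)) (Finset.mem_univ (ω u))
    · simp only [hg, if_neg hu, abs_zero]; exact hC0
  have hInt : ∀ a b : ℝ, IntervalIntegrable g MeasureTheory.volume a b := by
    intro a b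
    refine (intervalIntegrable_const (c := C)).mono_fun hgm.aestronglyMeasurable ?_
    filter_upwards with u
    rw [Real.norm_eq_abs, Real.norm_eq_abs, abs_of_nonneg hC0]
    exact hgb u
  set Φ : ℝ → ℝ := fun u => ∫ x in s..u, g x with hΦ
  have hΦc : Continuous Φ := intervalIntegral.continuous_primitive hInt s
  have hphi : ∀ u, s ≤ u → phi v s u ω = Φ u := by
    intro u hu
    apply intervalIntegral.integral_congr
    intro w hw
    rw [Set.uIcc_of_le hu] at hw
    simp [hg, hw.1]
  -- basic facts about T = tauP = tauM
  have hTge : ENNReal.ofReal s ≤ tauP v s ℓp ω := by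
    apply le_sInf
    rintro a ⟨u, hu, rfl, -⟩
    exact ENNReal.ofReal_le_ofReal hu
  set r : ℝ := (tauP v s ℓp ω).toReal with hr
  have hsr : s ≤ r := by
    have := ENNReal.toReal_mono hne hTge
    rwa [ENNReal.toReal_ofReal hs] at this
  have hr0 : 0 ≤ r := hs.trans hsr
  have hTr : tauP v s ℓp ω = ENNReal.ofReal r := (ENNReal.ofReal_toReal hne).symm
  have hexP : ∀ δ > (0:ℝ), ∃ u, r ≤ u ∧ u < r + δ ∧ ℓp < phi v s u ω := by
    intro δ hδ
    have h1 : tauP v s ℓp ω < tauP v s ℓp ω + ENNReal.ofReal δ :=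
      ENNReal.lt_add_right hne (by simp [ENNReal.ofReal_pos.mpr hδ, ne_of_gt])
    obtain ⟨a, ⟨u, hu, rfl, hφ⟩, hlt⟩ := sInf_lt_iff.mp h1
    have hu0 : 0 ≤ u := hs.trans hu
    have hur : r ≤ u := by
      have h2 : ENNReal.ofReal r ≤ ENNReal.ofReal u := by
        rw [← hTr]; exact sInf_le ⟨u, hu, rfl, hφ⟩
      exact (ENNReal.ofReal_le_ofReal_iff hu0).mp h2
    have hult : u < r + δ := by
      have h2 : ENNReal.ofReal u < ENNReal.ofReal (r + δ) := by
        rw [ENNReal.ofReal_add hr0 hδ.le, ← hTr]; exact hlt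
      exact (ENNReal.ofReal_lt_ofReal_iff_of_nonneg hu0).mp h2
    exact ⟨u, hur, hult, hφ⟩
  have hexM : ∀ δ > (0:ℝ), ∃ u, r ≤ u ∧ u < r + δ ∧ phi v s u ω < -ℓm := by
    intro δ hδ
    have h1 : tauM v s ℓm ω < tauP v s ℓp ω + ENNReal.ofReal δ := by
      rw [← heq]
      exact ENNReal.lt_add_right hne (by simp [ENNReal.ofReal_pos.mpr hδ, ne_of_gt])
    obtain ⟨a, ⟨u, hu, rfl, hφ⟩, hlt⟩ := sInf_lt_iff.mp h1
    have hu0 : 0 ≤ u := hs.trans hu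
    have hur : r ≤ u := by
      have h2 : ENNReal.ofReal r ≤ ENNReal.ofReal u := by
        rw [← hTr, heq]; exact sInf_le ⟨u, hu, rfl, hφ⟩
      exact (ENNReal.ofReal_le_ofReal_iff hu0).mp h2
    have hult : u < r + δ := by
      have h2 : ENNReal.ofReal u < ENNReal.ofReal (r + δ) := by
        rw [ENNReal.ofReal_add hr0 hδ.le, ← hTr]; exact hlt
      exact (ENNReal.ofReal_lt_ofReal_iff_of_nonneg hu0).mp h2
    exact ⟨u, hur, hult, hφ⟩
  have hΦge : ℓp ≤ Φ r := by
    by_contra hlt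
    push_neg at hlt
    have hopen : IsOpen {u : ℝ | Φ u < ℓp} := isOpen_lt hΦc continuous_const
    obtain ⟨δ, hδ, hball⟩ := Metric.isOpen_iff.mp hopen r hlt
    obtain ⟨u, hur, hud, hφ⟩ := hexP δ hδ
    have hu2 : Φ u < ℓp := hball (by
      rw [Metric.mem_ball, Real.dist_eq, abs_of_nonneg (by linarith)]; linarith)
    rw [hphi u (hsr.trans hur)] at hφ; linarith
  have hΦle : Φ r ≤ -ℓm := by
    by_contra hlt
    push_neg at hlt
    have hopen : IsOpen {u : ℝ | -ℓm < Φ u} := isOpen_lt continuous_const hΦc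
    obtain ⟨δ, hδ, hball⟩ := Metric.isOpen_iff.mp hopen r hlt
    obtain ⟨u, hur, hud, hφ⟩ := hexM δ hδ
    have hu2 : -ℓm < Φ u := hball (by
      rw [Metric.mem_ball, Real.dist_eq, abs_of_nonneg (by linarith)]; linarith)
    rw [hphi u (hsr.trans hur)] at hφ; linarith
  have hℓp0 : ℓp = 0 := le_antisymm (by linarith) hℓp
  have hΦ0 : Φ r = 0 := le_antisymm (by linarith) (by linarith)
  obtain ⟨ε, hε, hconst⟩ := hrc r hsr
  have hlin : ∀ u, r ≤ u → u < r + ε → phi v s u ω = v (ω r) * (u - r) := by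
    intro u h1 h2
    rw [hphi u (hsr.trans h1)]
    have hadd : Φ r + ∫ x in r..u, g x = Φ u :=
      intervalIntegral.integral_add_adjacent_intervals (hInt s r) (hInt r u)
    have hcongr : (∫ x in r..u, g x) = ∫ _x in r..u, v (ω r) := by
      apply intervalIntegral.integral_congr
      intro w hw
      rw [Set.uIcc_of_le h1] at hw
      have hws : s ≤ w := hsr.trans hw.1
      have hwc : ω w = ω r := hconst w ⟨hw.1, lt_of_le_of_lt hw.2 h2⟩
      simp [hg, hws, hwc]
    rw [← hadd, hΦ0, hcongr, intervalIntegral.integral_const, zero_add, smul_eq_mul, mul_comm]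
  obtain ⟨up, hup1, hup2, hupφ⟩ := hexP ε hε
  obtain ⟨um, hum1, hum2, humφ⟩ := hexM ε hε
  rw [hlin up hup1 hup2, hℓp0] at hupφ
  rw [hlin um hum1 hum2] at humφ
  have hm0 : v (ω r) * (um - r) < 0 := lt_of_lt_of_le humφ (by linarith)
  have ha : 0 ≤ up - r := by linarith
  have hb : 0 ≤ um - r := by linarith
  rcases le_or_gt (v (ω r)) 0 with h | h
  · nlinarith [mul_nonneg (neg_nonneg.mpr h) ha]
  · exact absurd (mul_nonneg h.le hb) (not_le.mpr hm0)

end AuxLemmas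

/-- Exactly one of the alternatives `τ_{ℓ⁺}⁺ < τ_{ℓ⁻}⁻`, `τ_{ℓ⁻}⁻ < τ_{ℓ⁺}⁺`,
`τ_{ℓ⁺}⁺ = τ_{ℓ⁻}⁻ = ∞` holds; in particular if one of them is finite then they differ. -/
theorem two_sided_passage_trichotomy
    {E : Type*} [Fintype E] (v : Option E → ℝ)
    (hv : ∀ e : E, v (some e) ≠ 0) (hv0 : v none = 0)
    (s : ℝ) (hs : 0 ≤ s) (ω : CPath E)
    (hrc : ∀ t, s ≤ t → ∃ ε > 0, ∀ u ∈ Set.Ico t (t + ε), ω u = ω t)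
    (habs : ∀ t, s ≤ t → ω t = none → ∀ u, t ≤ u → ω u = none)
    (ℓp ℓm : ℝ) (hℓp : 0 ≤ ℓp) (hℓm : 0 ≤ ℓm) :
    (tauP v s ℓp ω < tauM v s ℓm ω ∨ tauM v s ℓm ω < tauP v s ℓp ω ∨
        (tauP v s ℓp ω = ∞ ∧ tauM v s ℓm ω = ∞)) ∧
    ¬(tauP v s ℓp ω < tauM v s ℓm ω ∧ tauM v s ℓm ω < tauP v s ℓp ω) ∧
    ¬(tauP v s ℓp ω < tauM v s ℓm ω ∧ tauP v s ℓp ω = ∞ ∧ tauM v s ℓm ω = ∞) ∧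
    ¬(tauM v s ℓm ω < tauP v s ℓp ω ∧ tauP v s ℓp ω = ∞ ∧ tauM v s ℓm ω = ∞) ∧
    ((tauP v s ℓp ω ≠ ∞ ∨ tauM v s ℓm ω ≠ ∞) → tauP v s ℓp ω ≠ tauM v s ℓm ω) := by
  have key : tauP v s ℓp ω = tauM v s ℓm ω → tauP v s ℓp ω = ∞ ∧ tauM v s ℓm ω = ∞ := by
    intro h
    have h1 := tau_key v s hs ω hrc ℓp ℓm hℓp hℓm h
    exact ⟨h1, h ▸ h1⟩
  refine ⟨?_, ?_, ?_, ?_, ?_⟩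
  · rcases lt_trichotomy (tauP v s ℓp ω) (tauM v s ℓm ω) with h | h | h
    · exact Or.inl h
    · exact Or.inr (Or.inr (key h))
    · exact Or.inr (Or.inl h)
  · rintro ⟨h1, h2⟩; exact lt_asymm h1 h2
  · rintro ⟨h1, h2, h3⟩; rw [h2, h3] at h1; exact lt_irrefl _ h1
  · rintro ⟨h1, h2, h3⟩; rw [h2, h3] at h1; exact lt_irrefl _ h1
  · rintro h hab
    rcases key hab with ⟨h1, h2⟩
    tauto
end

section
/- Suppose g⁺ ∈ B_b(X̄₊) decays exponentially fast to zero. Then for any ℓ⁺, ℓ⁻ ≥ 0 the series ∑_{n=1}^∞ (J⁻ 𝒫⁻_{ℓ⁻+ℓ⁺} J⁺ 𝒫⁺_{ℓ⁻+ℓ⁺})ⁿ g⁺ converges in the supremum norm (i.e. the partial sums form a Cauchy sequence in sup norm on X̄₊). Analogously, if g⁻ ∈ B_b(X̄₋) decays exponentially fast to zero, then for any ℓ⁺, ℓ⁻ ≥ 0 the series ∑_{n=1}^∞ (J⁺ 𝒫⁺_{ℓ⁻+ℓ⁺} J⁻ 𝒫⁻_{ℓ⁻+ℓ⁺})ⁿ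 g⁻ converges in the supremum norm. -/
open MeasureTheory Set Filter
open scoped ENNReal

/-- The composite operator `J⁻ 𝒫⁻_ℓ J⁺ 𝒫⁺_ℓ : B_b(X̄₊) → B_b(X̄₊)`. -/
noncomputable def opAplus {E : Type*} (P : ℝ → Option E → Measure (CPath E)) (v : Option E → ℝ) (ℓ : ℝ) :
    (ℝ≥0∞ → Option E → ℝ) → (ℝ≥0∞ → Option E → ℝ) :=
  fun h => opJM P v (opM P v ℓ (opJP P v (opP P v ℓ h)))

/-- The composite operator `J⁺ 𝒫⁺_ℓ J⁻ 𝒫⁻_ℓ : B_b(X̄₋) → B_b(X̄₋)`. -/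
noncomputable def opAminus {E : Type*} (P : ℝ → Option E → Measure (CPath E)) (v : Option E → ℝ) (ℓ : ℝ) :
    (ℝ≥0∞ → Option E → ℝ) → (ℝ≥0∞ → Option E → ℝ) :=
  fun h => opJP P v (opP P v ℓ (opJM P v (opM P v ℓ h)))

/-! The operators `𝒫_ℓ^±` and `J^±` are expectations at stopping times `σ(s) ≥ s`, so they preserve
every bound `|h(t, j)| ≤ D e^{-c t}`. The operators `J^±` only act at states of the opposite sign,
from which the level `0` cannot be crossed before the first jump `γ(s)`; the jump rates are bounded
by `K`, so with probability at least `e^{-K}` no jump occurs before `s + 1`, and on that event the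
bound improves by the factor `e^{-c}`. Hence each composite operator `J^∓ 𝒫^∓ J^± 𝒫^±` contracts
the bound by `ρ = 1 - e^{-K} (1 - e^{-c}) < 1`, and the Neumann series is dominated by a geometric
series. -/

lemma abs_integral_le_add_mul_measureReal {α : Type*} [MeasurableSpace α] {μ : Measure α}
    [IsProbabilityMeasure μ] {f : α → ℝ} {A : Set α} {a b : ℝ}
    (ha : ∀ᵐ ω ∂μ, |f ω| ≤ a) (hb : ∀ᵐ ω ∂μ, ω ∉ A → |f ω| ≤ b) :
    |∫ ω, f ω ∂μ| ≤ b + (a - b) * μ.real A := by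
  -- `A` need not be measurable, so we work with a measurable hull of it.
  set A' := toMeasurable μ A
  have hA' : MeasurableSet A' := measurableSet_toMeasurable μ A
  have hG : Integrable (fun ω => b + A'.indicator (fun _ => a - b) ω) μ :=
    (integrable_const b).add ((integrable_const (a - b)).indicator hA')
  have hfG : ∀ᵐ ω ∂μ, ‖f ω‖ ≤ b + A'.indicator (fun _ => a - b) ω := by
    filter_upwards [ha, hb] with ω hωa hωb
    by_cases hω : ω ∈ A'
    · simpa [Set.indicator_of_mem hω] using hωa
    · simpa [Set.indicator_of_notMem hω] using hωb fun h => hω (subset_toMeasurable μ A h)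
  calc |∫ ω, f ω ∂μ| ≤ ∫ ω, b + A'.indicator (fun _ => a - b) ω ∂μ :=
        norm_integral_le_of_norm_le hG hfG
    _ = b + (a - b) * μ.real A := by
        rw [integral_add (integrable_const b) ((integrable_const (a - b)).indicator hA'),
          integral_const, integral_indicator_const _ hA', measureReal_def μ A',
          measure_toMeasurable, ← measureReal_def]
        simp [mul_comm]

lemma exists_abs_sum_Icc_sub_sum_Icc_le_of_geometric {ι : Type*} (u : ℕ → ι → ℝ) {C ρ : ℝ}
    (hC : 0 < C) (hρ0 : 0 ≤ ρ) (hρ1 : ρ < 1) (hu : ∀ k x, |u k x| ≤ C * ρ ^ k)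
    {ε : ℝ} (hε : 0 < ε) :
    ∃ N : ℕ, ∀ m n : ℕ, N ≤ m → N ≤ n → ∀ x : ι,
      |(∑ k ∈ Finset.Icc 1 m, u k x) - ∑ k ∈ Finset.Icc 1 n, u k x| ≤ ε := by
  have h1ρ : 0 < 1 - ρ := sub_pos.mpr hρ1
  obtain ⟨N, hN⟩ := exists_pow_lt_of_lt_one (by positivity : 0 < ε * (1 - ρ) / C) hρ1
  refine ⟨N, fun m n hm hn x => ?_⟩
  wlog hnm : n ≤ m generalizing m n
  · rw [abs_sub_comm]
    exact this n m hn hm (le_of_not_ge hnm)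
  have hIcc : ∀ k, Finset.Icc 1 k = Finset.Ioc 0 k := fun k => by
    ext; simp only [Finset.mem_Icc, Finset.mem_Ioc]; omega
  have hdiff : (∑ k ∈ Finset.Icc 1 m, u k x) - ∑ k ∈ Finset.Icc 1 n, u k x
      = ∑ k ∈ Finset.Ico (n + 1) (m + 1), u k x := by
    rw [hIcc, hIcc, ← Finset.sum_Ioc_consecutive _ (Nat.zero_le n) hnm,
      Finset.Ico_add_one_add_one_eq_Ioc]
    ring
  rw [hdiff]
  calc |∑ k ∈ Finset.Ico (n + 1) (m + 1), u k x|
      ≤ ∑ k ∈ Finset.Ico (n + 1) (m + 1), C * ρ ^ k :=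
        (Finset.abs_sum_le_sum_abs _ _).trans (Finset.sum_le_sum fun k _ => hu k x)
    _ ≤ C * (ρ ^ (n + 1) / (1 - ρ)) := by
        rw [← Finset.mul_sum]
        exact mul_le_mul_of_nonneg_left (geom_sum_Ico_le_of_lt_one hρ0 hρ1) hC.le
    _ ≤ C * (ρ ^ N / (1 - ρ)) :=
        mul_le_mul_of_nonneg_left (div_le_div_of_nonneg_right
          (pow_le_pow_of_le_one hρ0 hρ1.le (by omega)) h1ρ.le) hC.le
    _ ≤ ε := by
        rw [lt_div_iff₀ hC] at hN
        rw [mul_div_assoc', div_le_iff₀ h1ρ]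
        linarith

noncomputable def contractionFactor (K c : ℝ) : ℝ := 1 - Real.exp (-K) * (1 - Real.exp (-c))

lemma contractionFactor_nonneg {K c : ℝ} (hK : 0 ≤ K) : 0 ≤ contractionFactor K c := by
  have h1 : Real.exp (-K) ≤ 1 := Real.exp_le_one_iff.mpr (neg_nonpos.mpr hK)
  have h2 : 1 - Real.exp (-c) ≤ 1 := by linarith [Real.exp_pos (-c)]
  unfold contractionFactor
  nlinarith [Real.exp_pos (-K)]

lemma contractionFactor_lt_one (K : ℝ) {c : ℝ} (hc : 0 < c) : contractionFactor K c < 1 := by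
  have : Real.exp (-c) < 1 := Real.exp_lt_one_iff.mpr (neg_neg_iff_pos.mpr hc)
  unfold contractionFactor
  nlinarith [Real.exp_pos (-K)]

def ExpDominated {α : Type*} (D c : ℝ) (h : ℝ≥0∞ → α → ℝ) : Prop :=
  (∀ j, h ∞ j = 0) ∧ ∀ t j, t ≠ ∞ → |h t j| ≤ D * Real.exp (-c * t.toReal)

namespace ExpDominated

variable {α : Type*} {D c : ℝ} {h : ℝ≥0∞ → α → ℝ}

lemma abs_le_of_ofReal_le (hh : ExpDominated D c h) (hD : 0 ≤ D) (hc : 0 ≤ c)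
    {T : ℝ} {τ : ℝ≥0∞} (hτ : ENNReal.ofReal T ≤ τ) (j : α) :
    |h τ j| ≤ D * Real.exp (-c * T) := by
  by_cases hτ_top : τ = ∞
  · rw [hτ_top, hh.1 j, abs_zero]
    positivity
  · refine (hh.2 τ j hτ_top).trans (mul_le_mul_of_nonneg_left ?_ hD)
    have : T ≤ τ.toReal := (ENNReal.ofReal_le_iff_le_toReal hτ_top).mp hτ
    exact Real.exp_le_exp.mpr (by nlinarith)

lemma abs_le (hh : ExpDominated D c h) (hD : 0 ≤ D) (hc : 0 ≤ c) (t : ℝ≥0∞) (j : α) :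
    |h t j| ≤ D := by
  simpa using hh.abs_le_of_ofReal_le hD hc (by simp : ENNReal.ofReal 0 ≤ t) j

lemma iterate {T : (ℝ≥0∞ → α → ℝ) → ℝ≥0∞ → α → ℝ} {ρ : ℝ} (hρ : 0 ≤ ρ)
    (hT : ∀ D h, 0 ≤ D → ExpDominated D c h → ExpDominated (ρ * D) c (T h))
    (hh : ExpDominated D c h) (hD : 0 ≤ D) (k : ℕ) :
    ExpDominated (ρ ^ k * D) c (T^[k] h) := by
  induction k with
  | zero => simpa using hh
  | succ k ih =>
    rw [Function.iterate_succ_apply', pow_succ', mul_assoc]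
    exact hT _ _ (by positivity) ih

lemma applyAt {E : Type*} {h : ℝ≥0∞ → Option E → ℝ} (hh : ExpDominated D c h)
    (hD : 0 ≤ D) (hc : 0 ≤ c) {P : ℝ → Option E → Measure (CPath E)}
    (hP : ∀ s j, IsProbabilityMeasure (P s j)) {σ : ℝ → CPath E → ℝ≥0∞}
    (hσ : ∀ s ω, ENNReal.ofReal s ≤ σ s ω) :
    ExpDominated D c (applyAt P σ h) := by
  refine ⟨fun j => if_pos rfl, fun t j ht => ?_⟩
  rw [_root_.applyAt, if_neg ht]
  have := hP t.toReal j
  simpa using norm_integral_le_of_norm_le_const (μ := P t.toReal j)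
    (f := fun ω => h (σ t.toReal ω) (Xat (σ t.toReal ω) ω))
    (ae_of_all _ fun ω =>
      (Real.norm_eq_abs _).trans_le (hh.abs_le_of_ofReal_le hD hc (hσ _ ω) _))

end ExpDominated

section Restriction

variable {E : Type*} {v : Option E → ℝ} {D c : ℝ} {f : ℝ≥0∞ → Option E → ℝ}

lemma expDominated_restrP (hD : 0 ≤ D)
    (hf : ∀ e, 0 < v (some e) → ∀ t, t ≠ ∞ → |f t (some e)| ≤ D * Real.exp (-c * t.toReal)) :
    ExpDominated D c (restrP v f) := by
  refine ⟨fun j => by cases j <;> simp [restrP], fun t j ht => ?_⟩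
  rcases j with _ | e
  · simp only [restrP, abs_zero]
    positivity
  · by_cases he : 0 < v (some e)
    · simpa [restrP, he, ht] using hf e he t ht
    · simp only [restrP, he, false_and, if_false, abs_zero]
      positivity

lemma expDominated_restrM (hD : 0 ≤ D)
    (hf : ∀ e, v (some e) < 0 → ∀ t, t ≠ ∞ → |f t (some e)| ≤ D * Real.exp (-c * t.toReal)) :
    ExpDominated D c (restrM v f) := by
  refine ⟨fun j => by cases j <;> simp [restrM], fun t j ht => ?_⟩
  rcases j with _ | e
  · simp only [restrM, abs_zero]
    positivity
  · by_cases he : v (some e) < 0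
    · simpa [restrM, he, ht] using hf e he t ht
    · simp only [restrM, he, false_and, if_false, abs_zero]
      positivity

lemma ExpDominated.restrP (hf : ExpDominated D c f) (hD : 0 ≤ D) :
    ExpDominated D c (_root_.restrP v f) :=
  expDominated_restrP hD fun _ _ t ht => hf.2 t _ ht

lemma ExpDominated.restrM (hf : ExpDominated D c f) (hD : 0 ≤ D) :
    ExpDominated D c (_root_.restrM v f) :=
  expDominated_restrM hD fun _ _ t ht => hf.2 t _ ht

lemma MemBbP.expDominated (hf : MemBbP v f) {C c : ℝ}
    (hdec : ∀ t j, t ≠ ∞ → |f t j| ≤ C * Real.exp (-c * t.toReal)) :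
    ExpDominated C c f :=
  ⟨fun j => by rcases j with _ | e; exacts [hf.2.2.1 ∞, hf.2.2.2 ∞ e (by simp)], hdec⟩

lemma MemBbM.expDominated (hf : MemBbM v f) {C c : ℝ}
    (hdec : ∀ t j, t ≠ ∞ → |f t j| ≤ C * Real.exp (-c * t.toReal)) :
    ExpDominated C c f :=
  ⟨fun j => by rcases j with _ | e; exacts [hf.2.2.1 ∞, hf.2.2.2 ∞ e (by simp)], hdec⟩

end Restriction

section PassageTimes

variable {E : Type*} {v : Option E → ℝ} {s : ℝ} {ω : CPath E}

lemma ofReal_le_tauP (ℓ : ℝ) : ENNReal.ofReal s ≤ tauP v s ℓ ω :=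
  le_sInf fun _ ⟨_, hsu, hx, _⟩ => hx ▸ ENNReal.ofReal_le_ofReal hsu

lemma ofReal_le_tauM (ℓ : ℝ) : ENNReal.ofReal s ≤ tauM v s ℓ ω :=
  le_sInf fun _ ⟨_, hsu, hx, _⟩ => hx ▸ ENNReal.ofReal_le_ofReal hsu

lemma phi_eq_of_lt_gammaJump {i : E} (hω : ω s = some i) {u : ℝ} (hsu : s ≤ u)
    (hu : ENNReal.ofReal u < gammaJump s ω) : phi v s u ω = (u - s) * v (some i) := by
  have hconst : Set.EqOn (fun r => v (ω r)) (fun _ => v (some i)) (Set.uIcc s u) := by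
    intro r hr
    rw [Set.uIcc_of_le hsu] at hr
    have hωr : ω r = ω s := by
      by_contra hne
      have : gammaJump s ω ≤ ENNReal.ofReal r := sInf_le ⟨r, hr.1, rfl, hne⟩
      exact (this.trans (ENNReal.ofReal_le_ofReal hr.2)).not_gt hu
    simp only [hωr, hω]
  rw [phi, intervalIntegral.integral_congr hconst, intervalIntegral.integral_const, smul_eq_mul]

lemma gammaJump_le_tauM_zero {i : E} (hi : 0 ≤ v (some i)) (hω : ω s = some i) :
    gammaJump s ω ≤ tauM v s 0 ω := by
  refine le_sInf fun _ ⟨u, hsu, hx, hφ⟩ => hx ▸ le_of_not_gt fun hu => ?_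
  rw [phi_eq_of_lt_gammaJump hω hsu hu, neg_zero] at hφ
  nlinarith

lemma gammaJump_le_tauP_zero {i : E} (hi : v (some i) ≤ 0) (hω : ω s = some i) :
    gammaJump s ω ≤ tauP v s 0 ω := by
  refine le_sInf fun _ ⟨u, hsu, hx, hφ⟩ => hx ▸ le_of_not_gt fun hu => ?_
  rw [phi_eq_of_lt_gammaJump hω hsu hu] at hφ
  nlinarith

end PassageTimes

lemma MarkovFamily.ae_eq_init {E : Type*} {v : Option E → ℝ} (M : MarkovFamily E v) {s : ℝ}
    (hs : 0 ≤ s) (j : Option E) :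
    ∀ᵐ ω ∂M.P s j, ω s = j := by
  have := M.prob s j
  have hmeas : MeasurableSet {ω : CPath E | ω s = j} :=
    show MeasurableSet ((fun ω : CPath E => ω s) ⁻¹' {j}) from measurable_pi_apply s trivial
  exact (prob_compl_eq_zero_iff hmeas).mpr (M.init s j hs)

section Contraction

variable {E : Type*} [Fintype E] {v : Option E → ℝ} {M : MarkovFamily E v} {K : ℝ}

lemma GenAssumption.measureReal_gammaJump_le (GA : GenAssumption E v M K) {s : ℝ} (hs : 0 ≤ s)
    (i : E) :
    (M.P s (some i)).real {ω | gammaJump s ω ≤ ENNReal.ofReal (s + 1)} ≤ 1 - Real.exp (-K) := by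
  rw [measureReal_def, GA.jumpLaw s (s + 1) i hs (by linarith)]
  have hint : |∫ u in s..s + 1, GA.Lam u i i| ≤ K := by
    simpa using intervalIntegral.norm_integral_le_of_norm_le_const
      (a := s) (b := s + 1) fun u _ => (Real.norm_eq_abs _).trans_le (GA.bdd u i i)
  have := Real.exp_le_exp.mpr (neg_le_of_abs_le hint)
  linarith

lemma GenAssumption.abs_integral_le_contractionFactor_mul (GA : GenAssumption E v M K)
    {D c : ℝ} {h : ℝ≥0∞ → Option E → ℝ} (hh : ExpDominated D c h) (hD : 0 ≤ D) (hc : 0 < c)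
    {s : ℝ} (hs : 0 ≤ s) (i : E) {σ : CPath E → ℝ≥0∞} (hσ : ∀ ω, ENNReal.ofReal s ≤ σ ω)
    (hσγ : ∀ ω, ω s = some i → gammaJump s ω ≤ σ ω) :
    |∫ ω, h (σ ω) (Xat (σ ω) ω) ∂M.P s (some i)|
      ≤ contractionFactor K c * (D * Real.exp (-c * s)) := by
  have := M.prob s (some i)
  set a := D * Real.exp (-c * s)
  have hb : D * Real.exp (-c * (s + 1)) = a * Real.exp (-c) := by
    rw [show -c * (s + 1) = -c * s + -c by ring, Real.exp_add, mul_assoc]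
  have hab : 0 ≤ a - a * Real.exp (-c) := by
    have : Real.exp (-c) ≤ 1 := Real.exp_le_one_iff.mpr (by linarith)
    nlinarith [mul_nonneg hD (Real.exp_pos (-c * s)).le]
  have hbound := abs_integral_le_add_mul_measureReal (μ := M.P s (some i))
    (f := fun ω => h (σ ω) (Xat (σ ω) ω)) (A := {ω | gammaJump s ω ≤ ENNReal.ofReal (s + 1)})
    (ae_of_all _ fun ω => hh.abs_le_of_ofReal_le hD hc.le (hσ ω) _)
    (by
      filter_upwards [M.ae_eq_init hs (some i)] with ω hω hnA
      have hσ1 : ENNReal.ofReal (s + 1) ≤ σ ω := (lt_of_not_ge hnA).le.trans (hσγ ω hω)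
      exact (hh.abs_le_of_ofReal_le hD hc.le hσ1 _).trans_eq hb)
  calc _ ≤ a * Real.exp (-c) + (a - a * Real.exp (-c))
        * (M.P s (some i)).real {ω | gammaJump s ω ≤ ENNReal.ofReal (s + 1)} := hbound
    _ ≤ a * Real.exp (-c) + (a - a * Real.exp (-c)) * (1 - Real.exp (-K)) := by
        gcongr
        exact GA.measureReal_gammaJump_le hs i
    _ = contractionFactor K c * a := by
        unfold contractionFactor
        ring

variable {D c : ℝ} {h : ℝ≥0∞ → Option E → ℝ}

lemma ExpDominated.opJM (GA : GenAssumption E v M K) (hh : ExpDominated D c h) (hD : 0 ≤ D)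
    (hc : 0 < c) : ExpDominated (contractionFactor K c * D) c (_root_.opJM M.P v h) :=
  expDominated_restrP (mul_nonneg (contractionFactor_nonneg GA.hK.le) hD) fun e he t ht => by
    rw [_root_.applyAt, if_neg ht, mul_assoc]
    exact GA.abs_integral_le_contractionFactor_mul hh hD hc ENNReal.toReal_nonneg e
      (fun _ => ofReal_le_tauM 0) fun _ hω => gammaJump_le_tauM_zero he.le hω

lemma ExpDominated.opJP (GA : GenAssumption E v M K) (hh : ExpDominated D c h) (hD : 0 ≤ D)
    (hc : 0 < c) : ExpDominated (contractionFactor K c * D) c (_root_.opJP M.P v h) :=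
  expDominated_restrM (mul_nonneg (contractionFactor_nonneg GA.hK.le) hD) fun e he t ht => by
    rw [_root_.applyAt, if_neg ht, mul_assoc]
    exact GA.abs_integral_le_contractionFactor_mul hh hD hc ENNReal.toReal_nonneg e
      (fun _ => ofReal_le_tauP 0) fun _ hω => gammaJump_le_tauP_zero he.le hω

lemma ExpDominated.opAplus (GA : GenAssumption E v M K) (ℓ : ℝ) (hh : ExpDominated D c h)
    (hD : 0 ≤ D) (hc : 0 < c) :
    ExpDominated (contractionFactor K c * D) c (_root_.opAplus M.P v ℓ h) :=
  have hP : ExpDominated D c (opP M.P v ℓ h) :=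
    (hh.applyAt hD hc.le M.prob fun _ _ => ofReal_le_tauP ℓ).restrP hD
  have hJP : ExpDominated D c (_root_.opJP M.P v (opP M.P v ℓ h)) :=
    (hP.applyAt hD hc.le M.prob fun _ _ => ofReal_le_tauP 0).restrM hD
  have hM : ExpDominated D c (opM M.P v ℓ (_root_.opJP M.P v (opP M.P v ℓ h))) :=
    (hJP.applyAt hD hc.le M.prob fun _ _ => ofReal_le_tauM ℓ).restrM hD
  hM.opJM GA hD hc

lemma ExpDominated.opAminus (GA : GenAssumption E v M K) (ℓ : ℝ) (hh : ExpDominated D c h)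
    (hD : 0 ≤ D) (hc : 0 < c) :
    ExpDominated (contractionFactor K c * D) c (_root_.opAminus M.P v ℓ h) :=
  have hM : ExpDominated D c (opM M.P v ℓ h) :=
    (hh.applyAt hD hc.le M.prob fun _ _ => ofReal_le_tauM ℓ).restrM hD
  have hJM : ExpDominated D c (_root_.opJM M.P v (opM M.P v ℓ h)) :=
    (hM.applyAt hD hc.le M.prob fun _ _ => ofReal_le_tauM 0).restrP hD
  have hP : ExpDominated D c (opP M.P v ℓ (_root_.opJM M.P v (opM M.P v ℓ h))) :=
    (hJM.applyAt hD hc.le M.prob fun _ _ => ofReal_le_tauP ℓ).restrP hD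
  hP.opJP GA hD hc

end Contraction

lemma ExpDominated.exists_abs_sum_iterate_sub_le {α : Type*}
    {T : (ℝ≥0∞ → α → ℝ) → ℝ≥0∞ → α → ℝ} {C c ρ : ℝ} {g : ℝ≥0∞ → α → ℝ}
    (hρ0 : 0 ≤ ρ) (hρ1 : ρ < 1) (hc : 0 ≤ c)
    (hT : ∀ D h, 0 ≤ D → ExpDominated D c h → ExpDominated (ρ * D) c (T h))
    (hg : ExpDominated C c g) (hC : 0 < C) {ε : ℝ} (hε : 0 < ε) :
    ∃ N : ℕ, ∀ m n : ℕ, N ≤ m → N ≤ n → ∀ (t : ℝ≥0∞) (j : α),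
      |(∑ k ∈ Finset.Icc 1 m, (T^[k] g) t j) - ∑ k ∈ Finset.Icc 1 n, (T^[k] g) t j| ≤ ε := by
  have hu : ∀ k (x : ℝ≥0∞ × α), |(T^[k] g) x.1 x.2| ≤ C * ρ ^ k := fun k x => by
    rw [mul_comm]
    exact (hg.iterate hρ0 hT hC.le k).abs_le (by positivity) hc x.1 x.2
  obtain ⟨N, hN⟩ := exists_abs_sum_Icc_sub_sum_Icc_le_of_geometric _ hC hρ0 hρ1 hu hε
  exact ⟨N, fun m n hm hn t j => hN m n hm hn (t, j)⟩

theorem neumann_series_sup_norm_convergence_general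
    {E : Type*} [Fintype E] (v : Option E → ℝ)
    (M : MarkovFamily E v) (K : ℝ) (GA : GenAssumption E v M K)
    (ℓm ℓp : ℝ) :
    (∀ g : ℝ≥0∞ → Option E → ℝ, MemBbP v g → DecaysExp g →
      ∀ ε : ℝ, 0 < ε → ∃ N : ℕ, ∀ m n : ℕ, N ≤ m → N ≤ n →
        ∀ (t : ℝ≥0∞) (j : Option E),
          |(∑ k ∈ Finset.Icc 1 m, ((opAplus M.P v (ℓm + ℓp))^[k] g) t j)
            - ∑ k ∈ Finset.Icc 1 n, ((opAplus M.P v (ℓm + ℓp))^[k] g) t j| ≤ ε) ∧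
    (∀ g : ℝ≥0∞ → Option E → ℝ, MemBbM v g → DecaysExp g →
      ∀ ε : ℝ, 0 < ε → ∃ N : ℕ, ∀ m n : ℕ, N ≤ m → N ≤ n →
        ∀ (t : ℝ≥0∞) (j : Option E),
          |(∑ k ∈ Finset.Icc 1 m, ((opAminus M.P v (ℓm + ℓp))^[k] g) t j)
            - ∑ k ∈ Finset.Icc 1 n, ((opAminus M.P v (ℓm + ℓp))^[k] g) t j| ≤ ε) := by
  constructor
  · rintro g hg ⟨C, c, hC, hc, hdec⟩ ε hε
    exact ExpDominated.exists_abs_sum_iterate_sub_le (contractionFactor_nonneg GA.hK.le)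
      (contractionFactor_lt_one K hc) hc.le (fun _ _ hD hh => hh.opAplus GA _ hD hc)
      (hg.expDominated hdec) hC hε
  · rintro g hg ⟨C, c, hC, hc, hdec⟩ ε hε
    exact ExpDominated.exists_abs_sum_iterate_sub_le (contractionFactor_nonneg GA.hK.le)
      (contractionFactor_lt_one K hc) hc.le (fun _ _ hD hh => hh.opAminus GA _ hD hc)
      (hg.expDominated hdec) hC hε

/-- (Lemma 3.1: Neumann-series convergence.) If `g⁺ ∈ B_b(X̄₊)` decays
exponentially fast to zero, then `∑_{n=1}^∞ (J⁻ 𝒫⁻_{ℓ⁻+ℓ⁺} J⁺ 𝒫⁺_{ℓ⁻+ℓ⁺})ⁿ g⁺` converges in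
supremum norm (the partial sums are uniformly Cauchy), and analogously for
`g⁻ ∈ B_b(X̄₋)` and `∑_{n=1}^∞ (J⁺ 𝒫⁺_{ℓ⁻+ℓ⁺} J⁻ 𝒫⁻_{ℓ⁻+ℓ⁺})ⁿ g⁻`. -/
theorem neumann_series_sup_norm_convergence
    {E : Type*} [Fintype E] (hcard : 1 < Fintype.card E) (v : Option E → ℝ)
    (hv : ∀ e : E, v (some e) ≠ 0) (hv0 : v none = 0)
    (hEp : ∃ e : E, 0 < v (some e)) (hEm : ∃ e : E, v (some e) < 0)
    (M : MarkovFamily E v) (K : ℝ) (GA : GenAssumption E v M K)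
    (ℓm ℓp : ℝ) (hℓm : 0 ≤ ℓm) (hℓp : 0 ≤ ℓp) :
    (∀ g : ℝ≥0∞ → Option E → ℝ, MemBbP v g → DecaysExp g →
      ∀ ε : ℝ, 0 < ε → ∃ N : ℕ, ∀ m n : ℕ, N ≤ m → N ≤ n →
        ∀ (t : ℝ≥0∞) (j : Option E),
          |(∑ k ∈ Finset.Icc 1 m, ((opAplus M.P v (ℓm + ℓp))^[k] g) t j)
            - ∑ k ∈ Finset.Icc 1 n, ((opAplus M.P v (ℓm + ℓp))^[k] g) t j| ≤ ε) ∧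
    (∀ g : ℝ≥0∞ → Option E → ℝ, MemBbM v g → DecaysExp g →
      ∀ ε : ℝ, 0 < ε → ∃ N : ℕ, ∀ m n : ℕ, N ≤ m → N ≤ n →
        ∀ (t : ℝ≥0∞) (j : Option E),
          |(∑ k ∈ Finset.Icc 1 m, ((opAminus M.P v (ℓm + ℓp))^[k] g) t j)
            - ∑ k ∈ Finset.Icc 1 n, ((opAminus M.P v (ℓm + ℓp))^[k] g) t j| ≤ ε) :=
  neumann_series_sup_norm_convergence_general v M K GA ℓm ℓp
end

section
/- Let h : Ē → ℝ be bounded with h(∂) := 0, let T ∈ ℝ₊, and let ℓ⁺, ℓ⁻ ≥ 0. Define k⁺(t,j) := 1_{[0,T]}(t)·𝔼_{t,j}[h(X_T)] for (t,j) ∈ ℝ₊ × E₊ and k⁻(t,j) := 1_{[0,T]}(t)·𝔼_{t,j}[h(X_T)] for (t,j) ∈ ℝ₊ × E₋ (with k^±(∞,∂) := 0). Then for every (s,i) ∈ ℝ₊ × E, 𝔼_{s,i}[h(X_T)·1_{{τ_{ℓ⁻}⁻(s) ∧ τ_{ℓ⁺}⁺(s) ≤ T}}] = (Ξ⁺_{ℓ⁻,ℓ⁺}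 k⁺)(s,i) + (Ξ⁻_{ℓ⁻,ℓ⁺} k⁻)(s,i). -/
open MeasureTheory Set Filter
open scoped ENNReal

/-- The function `k(t,j) = 1_{[0,T]}(t) 𝔼_{t,j}[h(X_T)]` of Proposition 3.4. -/
noncomputable def kFun {E : Type*} (P : ℝ → Option E → Measure (CPath E))
    (h : Option E → ℝ) (T : ℝ) : ℝ≥0∞ → Option E → ℝ :=
  fun t j => if t ≠ ∞ ∧ t.toReal ≤ T then ∫ ω, h (ω T) ∂ P t.toReal j else 0

/-! Up to a null set, the event `{τ⁻ ∧ τ⁺ ≤ T}` is the disjoint union of the events where `τ⁺`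
comes strictly first and where `τ⁻` does: at a finite common value of the two passage times `v`
would have to be both positive and negative at the current state. On each piece the strong Markov
property at the exit time `ξ^±` turns `h(X_T) 1_{ξ^± ≤ T}` into `k(ξ^±, X_{ξ^±})`, and
`X_{ξ^±} ∈ E_±` because `φ` crosses its level there upwards, resp. downwards.

The passage times are defined through pathwise integrals, which need not be measurable in the path.
They are therefore replaced by versions built from dyadic Riemann sums at rational times; these
are `𝔽ₛ`-stopping times and coincide with the true passage times on every path that is right
locally constant, hence almost surely. -/

namespace LawBeforeExit

variable {E : Type*}

instance : DiscreteMeasurableSpace (Option E) := ⟨fun _ => MeasurableSpace.measurableSet_top⟩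

lemma natF_mono {s r r' : ℝ} (h : r ≤ r') : natF (E := E) s r ≤ natF s r' :=
  biSup_mono fun _ hu => ⟨hu.1, hu.2.trans h⟩

lemma natF_le_pi (s r : ℝ) : natF (E := E) s r ≤ MeasurableSpace.pi :=
  iSup₂_le fun u _ => (measurable_pi_apply u).comap_le

lemma measurable_eval_natF {s r u : ℝ} (hu : u ∈ Icc s r) :
    Measurable[natF s r] fun ω : CPath E => ω u :=
  Measurable.of_comap_le
    (le_biSup (fun u => MeasurableSpace.comap (fun ω : CPath E => ω u) ⊤) hu)

lemma Fst_le_pi (s : ℝ) (t : ℝ≥0∞) : Fst (E := E) s t ≤ MeasurableSpace.pi := by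
  rw [Fst]
  split_ifs
  · exact iSup₂_le fun u _ => (measurable_pi_apply u).comap_le
  · exact (iInf₂_le (t.toReal + 1) (lt_add_one t.toReal)).trans (natF_le_pi _ _)

lemma stoppedSigma_le_pi {s : ℝ} {τ : CPath E → ℝ≥0∞} (hτ : IsST s τ) :
    stoppedSigma s τ hτ ≤ MeasurableSpace.pi := fun A hA => by
  simpa using Fst_le_pi s ∞ _ (hA ∞)

lemma IsST.measurable {s : ℝ} {τ : CPath E → ℝ≥0∞} (hτ : IsST s τ) : Measurable τ :=
  measurable_of_Iic fun t => Fst_le_pi s t _ (hτ t)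

lemma _root_.ENNReal.le_ofReal_iff_forall_rat_lt {x : ℝ≥0∞} {q r : ℝ} (hq : 0 ≤ q)
    (hqr : q < r) :
    x ≤ ENNReal.ofReal q ↔ ∀ p : ℚ, q < p → (p : ℝ) < r → x < ENNReal.ofReal p := by
  refine ⟨fun hx p hqp _ => hx.trans_lt (ENNReal.ofReal_lt_ofReal_iff_of_nonneg hq |>.2 hqp),
    fun h => ?_⟩
  by_contra! hlt
  have hr : ENNReal.ofReal q < ENNReal.ofReal r :=
    (ENNReal.ofReal_lt_ofReal_iff_of_nonneg hq).2 hqr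
  obtain ⟨p, hp0, hqp, hpx⟩ := ENNReal.lt_iff_exists_rat_btwn.1 (lt_min hlt hr)
  have hqp' := (ENNReal.ofReal_lt_ofReal_iff_of_nonneg hq).1 hqp
  have hpr := (ENNReal.ofReal_lt_ofReal_iff_of_nonneg (by exact_mod_cast hp0)).1
    (hpx.trans_le (min_le_right _ _))
  exact (h p hqp' hpr).not_gt (hpx.trans_le (min_le_left _ _))

/-- The right continuity of `Fst s` reduces the stopping time property to strict events. -/
lemma isST_of_measurableSet_lt {s : ℝ} {τ : CPath E → ℝ≥0∞}
    (hτ : ∀ p : ℚ, MeasurableSet[natF s p] {ω | τ ω < ENNReal.ofReal p}) : IsST s τ := by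
  intro t
  rcases eq_or_ne t ∞ with rfl | ht
  · simp
  rw [Fst, if_neg ht, MeasurableSpace.measurableSet_iInf]
  intro r
  rw [MeasurableSpace.measurableSet_iInf]
  intro hr
  have hset : {ω | τ ω ≤ t} = ⋂ (p : ℚ) (_ : t.toReal < p) (_ : (p : ℝ) < r),
      {ω | τ ω < ENNReal.ofReal p} := by
    ext ω
    simp only [mem_ofPred_eq, mem_iInter]
    conv_lhs => rw [← ENNReal.ofReal_toReal ht]
    exact ENNReal.le_ofReal_iff_forall_rat_lt ENNReal.toReal_nonneg hr
  rw [hset]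
  exact .iInter fun p => .iInter fun _ => .iInter fun hpr => natF_mono hpr.le _ (hτ p)

noncomputable def dyadicCeil (n : ℕ) (r : ℝ) : ℝ := ((⌈r * 2 ^ n⌉ : ℤ) : ℝ) / 2 ^ n

lemma le_dyadicCeil (n : ℕ) (r : ℝ) : r ≤ dyadicCeil n r := by
  rw [dyadicCeil, le_div_iff₀ (by positivity)]
  exact Int.le_ceil _

lemma dyadicCeil_lt_add (n : ℕ) (r : ℝ) : dyadicCeil n r < r + ((2 : ℝ) ^ n)⁻¹ := by
  have h2 : (0 : ℝ) < 2 ^ n := by positivity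
  rw [dyadicCeil, div_lt_iff₀ h2, add_mul, inv_mul_cancel₀ h2.ne']
  exact Int.ceil_lt_add_one _

lemma measurable_comp_dyadicCeil {β : Type*} [MeasurableSpace β] (g : ℝ → β) (n : ℕ) :
    Measurable fun r => g (dyadicCeil n r) :=
  (measurable_of_countable fun k : ℤ => g (k / 2 ^ n)).comp
    (Int.measurable_ceil.comp (measurable_id.mul_const _))

lemma eventually_dyadicCeil_mem_Ico (t : ℝ) {ε : ℝ} (hε : 0 < ε) :
    ∀ᶠ n in atTop, dyadicCeil n t ∈ Ico t (t + ε) := by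
  have h2 : Tendsto (fun n : ℕ => ((2 : ℝ) ^ n)⁻¹) atTop (nhds 0) :=
    tendsto_inv_atTop_zero.comp (tendsto_pow_atTop_atTop_of_one_lt one_lt_two)
  filter_upwards [h2.eventually (gt_mem_nhds hε)] with n hn
  exact ⟨le_dyadicCeil n t, (dyadicCeil_lt_add n t).trans_le (by linarith)⟩

def RightLocallyConstantFrom (s : ℝ) (ω : CPath E) : Prop :=
  ∀ t, s ≤ t → ∃ ε > 0, ∀ u ∈ Ico t (t + ε), ω u = ω t

namespace RightLocallyConstantFrom

variable {s : ℝ} {ω : CPath E}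

lemma eventually_dyadicCeil (hω : RightLocallyConstantFrom s ω) {t : ℝ} (ht : s ≤ t) :
    ∀ᶠ n in atTop, ω (dyadicCeil n t) = ω t := by
  obtain ⟨ε, hε, hconst⟩ := hω t ht
  exact (eventually_dyadicCeil_mem_Ico t hε).mono fun n hn => hconst _ hn

lemma measurable_comp_max (hω : RightLocallyConstantFrom s ω) (w : Option E → ℝ) :
    Measurable fun r => w (ω (max r s)) := by
  refine measurable_of_tendsto_metrizable
    (f := fun n r => w (ω (dyadicCeil n (max r s))))
    (fun n => (measurable_comp_dyadicCeil (fun x => w (ω x)) n).comp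
      (measurable_id.max measurable_const))
    (tendsto_pi_nhds.2 fun r => tendsto_const_nhds.congr' ?_)
  exact (hω.eventually_dyadicCeil (le_max_right r s)).mono fun n hn => congrArg w hn.symm

end RightLocallyConstantFrom

section Phi

variable {w : Option E → ℝ} {W : ℝ} {s ℓ : ℝ} {ω : CPath E}

lemma phi_self (w : Option E → ℝ) (s : ℝ) (ω : CPath E) : phi w s s ω = 0 :=
  intervalIntegral.integral_same

lemma phi_neg (w : Option E → ℝ) (s u : ℝ) (ω : CPath E) : phi (-w) s u ω = -phi w s u ω :=
  intervalIntegral.integral_neg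

lemma abs_neg_apply_le (hW : ∀ j, |w j| ≤ W) (j : Option E) : |(-w) j| ≤ W :=
  (abs_neg (w j)).trans_le (hW j)

lemma RightLocallyConstantFrom.intervalIntegrable (hW : ∀ j, |w j| ≤ W)
    (hω : RightLocallyConstantFrom s ω) {a b : ℝ} (ha : s ≤ a) (hb : s ≤ b) :
    IntervalIntegrable (fun r => w (ω r)) volume a b := by
  have hsub : uIoc a b ⊆ Ici s := fun x hx => (le_min ha hb).trans hx.1.le
  refine (intervalIntegrable_const (c := W)).mono_fun ?_ (ae_of_all _ fun r => ?_)
  · refine (hω.measurable_comp_max w).aestronglyMeasurable.congr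
      ((ae_restrict_iff' measurableSet_uIoc).2 (ae_of_all _ fun r hr => ?_))
    simp only [max_eq_left (mem_Ici.1 (hsub hr))]
  · simpa [Real.norm_eq_abs, abs_of_nonneg ((abs_nonneg _).trans (hW none))] using hW (ω r)

lemma phi_sub_phi (hW : ∀ j, |w j| ≤ W) (hω : RightLocallyConstantFrom s ω) {a b : ℝ}
    (ha : s ≤ a) (hb : s ≤ b) : phi w s b ω - phi w s a ω = ∫ r in a..b, w (ω r) :=
  intervalIntegral.integral_interval_sub_left (hω.intervalIntegrable hW le_rfl hb)
    (hω.intervalIntegrable hW le_rfl ha)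

lemma phi_sub_phi_le (hW : ∀ j, |w j| ≤ W) (hω : RightLocallyConstantFrom s ω) {a b : ℝ}
    (ha : s ≤ a) (hab : a ≤ b) : phi w s b ω - phi w s a ω ≤ W * (b - a) := by
  rw [phi_sub_phi hW hω ha (ha.trans hab)]
  have := intervalIntegral.norm_integral_le_of_norm_le_const (a := a) (b := b)
    (f := fun r => w (ω r)) fun r _ => (Real.norm_eq_abs _).trans_le (hW (ω r))
  rw [abs_of_nonneg (sub_nonneg.2 hab)] at this
  exact (le_abs_self _).trans this

lemma phi_eq_add_mul (hW : ∀ j, |w j| ≤ W) (hω : RightLocallyConstantFrom s ω) {t₀ ε u : ℝ}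
    (ht₀ : s ≤ t₀) (hconst : ∀ x ∈ Ico t₀ (t₀ + ε), ω x = ω t₀) (hu : u ∈ Ico t₀ (t₀ + ε)) :
    phi w s u ω = phi w s t₀ ω + w (ω t₀) * (u - t₀) := by
  have hint : ∫ r in t₀..u, w (ω r) = ∫ _ in t₀..u, w (ω t₀) :=
    intervalIntegral.integral_congr fun x hx => by
      rw [uIcc_of_le hu.1] at hx
      rw [hconst x ⟨hx.1, hx.2.trans_lt hu.2⟩]
  have := phi_sub_phi hW hω ht₀ (ht₀.trans hu.1)
  rw [hint, intervalIntegral.integral_const, smul_eq_mul] at this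
  linarith

lemma exists_Ioo_phi_gt (hW : ∀ j, |w j| ≤ W) (hω : RightLocallyConstantFrom s ω) {u : ℝ}
    (hsu : s < u) (hu : ℓ < phi w s u ω) : ∃ a ∈ Ico s u, ∀ x ∈ Ioo a u, ℓ < phi w s x ω := by
  have hW0 : 0 ≤ W := (abs_nonneg _).trans (hW none)
  set δ := (phi w s u ω - ℓ) / (W + 1)
  have hδ : 0 < δ := div_pos (by linarith) (by linarith)
  have hWδ : W * δ < phi w s u ω - ℓ := by
    have : (W + 1) * δ = phi w s u ω - ℓ := mul_div_cancel₀ _ (by linarith)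
    nlinarith
  refine ⟨max s (u - δ), ⟨le_max_left _ _, max_lt hsu (by linarith)⟩, fun x hx => ?_⟩
  have hsx : s ≤ x := (le_max_left _ _).trans hx.1.le
  have hux : u - x ≤ δ := by linarith [le_max_right s (u - δ), hx.1]
  have := phi_sub_phi_le hW hω hsx hx.2.le
  nlinarith

lemma tauP_le_ofReal {u : ℝ} (hsu : s ≤ u) (hu : ℓ < phi w s u ω) :
    tauP w s ℓ ω ≤ ENNReal.ofReal u :=
  sInf_le ⟨u, hsu, rfl, hu⟩

lemma exists_phi_gt_of_tauP_lt {b : ℝ≥0∞} (hb : tauP w s ℓ ω < b) :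
    ∃ u, s ≤ u ∧ ENNReal.ofReal u < b ∧ ℓ < phi w s u ω := by
  obtain ⟨_, ⟨u, hsu, rfl, hu⟩, hub⟩ := sInf_lt_iff.1 hb
  exact ⟨u, hsu, hub, hu⟩

lemma le_toReal_tauP (hs : 0 ≤ s) (hne : tauP w s ℓ ω ≠ ∞) : s ≤ (tauP w s ℓ ω).toReal := by
  have : ENNReal.ofReal s ≤ tauP w s ℓ ω := le_sInf fun _ ⟨u, hsu, hu, _⟩ =>
    hu ▸ ENNReal.ofReal_le_ofReal hsu
  simpa [ENNReal.toReal_ofReal hs] using ENNReal.toReal_mono hne this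

lemma phi_tauP_le (hW : ∀ j, |w j| ≤ W) (hs : 0 ≤ s) (hℓ : 0 ≤ ℓ)
    (hω : RightLocallyConstantFrom s ω) (hne : tauP w s ℓ ω ≠ ∞) :
    phi w s (tauP w s ℓ ω).toReal ω ≤ ℓ := by
  rcases (le_toReal_tauP hs hne).eq_or_lt with heq | hlt
  · rw [← heq, phi_self]
    exact hℓ
  by_contra! hgt
  obtain ⟨a, ha, hphi⟩ := exists_Ioo_phi_gt hW hω hlt hgt
  obtain ⟨x, hax, hxt⟩ := exists_between ha.2
  have hsx : s ≤ x := ha.1.trans hax.le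
  have := ENNReal.toReal_le_of_le_ofReal (hs.trans hsx)
    (tauP_le_ofReal hsx (hphi x ⟨hax, hxt⟩))
  linarith

/-- At a finite passage time `tauP` the path sits in a state where `w` is positive: `phi` has
not exceeded `ℓ` yet, and it does so immediately afterwards while growing with slope
`w (ω tauP)`. -/
lemma apply_tauP_pos (hW : ∀ j, |w j| ≤ W) (hs : 0 ≤ s) (hℓ : 0 ≤ ℓ)
    (hω : RightLocallyConstantFrom s ω) (hne : tauP w s ℓ ω ≠ ∞) :
    0 < w (ω (tauP w s ℓ ω).toReal) := by
  set t₀ := (tauP w s ℓ ω).toReal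
  have hst₀ : s ≤ t₀ := le_toReal_tauP hs hne
  obtain ⟨ε, hε, hconst⟩ := hω t₀ hst₀
  have hlt : tauP w s ℓ ω < ENNReal.ofReal (t₀ + ε) := by
    rw [← ENNReal.ofReal_toReal hne]
    exact ENNReal.ofReal_lt_ofReal_iff'.2 ⟨by linarith, by linarith⟩
  obtain ⟨u, hsu, hut, hu⟩ := exists_phi_gt_of_tauP_lt hlt
  have ht₀u : t₀ ≤ u := ENNReal.toReal_le_of_le_ofReal (hs.trans hsu) (tauP_le_ofReal hsu hu)
  have hstep := phi_eq_add_mul hW hω hst₀ hconst ⟨ht₀u, (ENNReal.ofReal_lt_ofReal_iff'.1 hut).1⟩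
  have := phi_tauP_le hW hs hℓ hω hne
  by_contra! hnonpos
  nlinarith

lemma tauM_eq_tauP_neg (w : Option E → ℝ) (s ℓ : ℝ) (ω : CPath E) :
    tauM w s ℓ ω = tauP (-w) s ℓ ω := by
  simp only [tauM, tauP, phi_neg, lt_neg]

lemma tauP_eq_top_of_eq_tauM (hW : ∀ j, |w j| ≤ W) (hs : 0 ≤ s) {ℓm ℓp : ℝ} (hℓm : 0 ≤ ℓm)
    (hℓp : 0 ≤ ℓp) (hω : RightLocallyConstantFrom s ω) (h : tauP w s ℓp ω = tauM w s ℓm ω) :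
    tauP w s ℓp ω = ∞ := by
  by_contra hne
  have hpos := apply_tauP_pos hW hs hℓp hω hne
  rw [h, tauM_eq_tauP_neg] at hpos hne
  have hneg := apply_tauP_pos (abs_neg_apply_le hW) hs hℓm hω hne
  simp only [Pi.neg_apply, neg_pos] at hneg
  linarith

end Phi

section Version

noncomputable def dyadicPhi (w : Option E → ℝ) (s : ℝ) (n : ℕ) (q : ℝ) (ω : CPath E) : ℝ :=
  ∫ r in s..q, w (ω (dyadicCeil n r))

lemma tendsto_dyadicPhi {w : Option E → ℝ} {W : ℝ} (hW : ∀ j, |w j| ≤ W) {s q : ℝ} (hsq : s ≤ q)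
    {ω : CPath E} (hω : RightLocallyConstantFrom s ω) :
    Tendsto (fun n => dyadicPhi w s n q ω) atTop (nhds (phi w s q ω)) := by
  refine intervalIntegral.tendsto_integral_filter_of_dominated_convergence (fun _ => W)
    (.of_forall fun n => (measurable_comp_dyadicCeil (fun x => w (ω x)) n).aestronglyMeasurable)
    (.of_forall fun n => ae_of_all _ fun r _ => (Real.norm_eq_abs _).trans_le (hW _))
    intervalIntegrable_const (ae_of_all _ fun r hr => tendsto_const_nhds.congr' ?_)
  rw [uIoc_of_le hsq] at hr
  exact (hω.eventually_dyadicCeil hr.1.le).mono fun n hn => congrArg w hn.symm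

/-- `dyadicPhi w s n q` only reads the path at the finitely many dyadic times
`k / 2 ^ n ∈ [s, q + 2⁻ⁿ)`. -/
lemma measurable_dyadicPhi [Countable E] (w : Option E → ℝ) {s q r : ℝ} {n : ℕ} (hsq : s ≤ q)
    (hqr : q + ((2 : ℝ) ^ n)⁻¹ ≤ r) : Measurable[natF s r] (dyadicPhi w s n q) := by
  have h2 : (0 : ℝ) < 2 ^ n := by positivity
  set K := Finset.Icc ⌈s * 2 ^ n⌉ ⌈q * 2 ^ n⌉
  have hK : ∀ k ∈ K, (k / 2 ^ n : ℝ) ∈ Icc s r := fun k hk => by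
    obtain ⟨hk₁, hk₂⟩ := Finset.mem_Icc.1 hk
    refine ⟨(le_div_iff₀ h2).2 (Int.ceil_le.1 hk₁), (div_le_iff₀ h2).2 ?_⟩
    have := (Int.cast_le (R := ℝ)).2 hk₂ |>.trans_lt (Int.ceil_lt_add_one (q * 2 ^ n))
    have hr : (q + ((2 : ℝ) ^ n)⁻¹) * 2 ^ n = q * 2 ^ n + 1 := by field_simp
    nlinarith
  let F : (K → Option E) → ℝ := fun y =>
    ∫ x in s..q, w (if hx : ⌈x * 2 ^ n⌉ ∈ K then y ⟨_, hx⟩ else none)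
  have hF : dyadicPhi w s n q = fun ω => F fun k => ω (k / 2 ^ n) := by
    funext ω
    refine intervalIntegral.integral_congr fun x hx => ?_
    rw [uIcc_of_le hsq] at hx
    have hxK : ⌈x * 2 ^ n⌉ ∈ K := Finset.mem_Icc.2
      ⟨Int.ceil_le_ceil (by gcongr; exact hx.1), Int.ceil_le_ceil (by gcongr; exact hx.2)⟩
    simp only [dif_pos hxK]
    rfl
  rw [hF]
  let : MeasurableSpace (CPath E) := natF s r
  exact (measurable_of_countable F).comp
    (measurable_pi_lambda _ fun k => measurable_eval_natF (hK k k.2))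

/-- The event `ℓ < phi w s q` read off the dyadic approximations; on right locally constant
paths it is exactly that event. -/
def crossEvent (w : Option E → ℝ) (s ℓ q : ℝ) : Set (CPath E) :=
  {ω | ∃ m : ℕ, ∀ᶠ n in atTop, ℓ + 1 / ((m : ℝ) + 1) < dyadicPhi w s n q ω}

lemma mem_crossEvent_iff {w : Option E → ℝ} {W : ℝ} (hW : ∀ j, |w j| ≤ W) {s ℓ q : ℝ}
    (hsq : s ≤ q) {ω : CPath E} (hω : RightLocallyConstantFrom s ω) :
    ω ∈ crossEvent w s ℓ q ↔ ℓ < phi w s q ω := by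
  have hlim := tendsto_dyadicPhi hW hsq hω
  constructor
  · rintro ⟨m, hm⟩
    have := ge_of_tendsto hlim (hm.mono fun n hn => hn.le)
    have : (0 : ℝ) < 1 / ((m : ℝ) + 1) := by positivity
    linarith
  · intro hlt
    obtain ⟨m, hm⟩ := exists_nat_one_div_lt (sub_pos.2 hlt)
    exact ⟨m, hlim.eventually (eventually_gt_nhds (by linarith))⟩

lemma measurableSet_crossEvent [Countable E] (w : Option E → ℝ) {s ℓ q r : ℝ} (hsq : s ≤ q)
    (hqr : q < r) : MeasurableSet[natF s r] (crossEvent w s ℓ q) := by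
  obtain ⟨N, hN⟩ : ∃ N : ℕ, ((2 : ℝ) ^ N)⁻¹ < r - q :=
    exists_pow_lt_of_lt_one (sub_pos.2 hqr) (by norm_num : (1 / 2 : ℝ) < 1) |>.imp
      fun N hN => by simpa [one_div, inv_pow] using hN
  have hmeas : ∀ n, N ≤ n → Measurable[natF s r] (dyadicPhi w s n q) := fun n hn =>
    measurable_dyadicPhi w hsq (by
      have : ((2 : ℝ) ^ n)⁻¹ ≤ ((2 : ℝ) ^ N)⁻¹ :=
        inv_anti₀ (by positivity) (pow_le_pow_right₀ one_le_two hn)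
      linarith)
  have hset : crossEvent w s ℓ q = ⋃ (m : ℕ) (M : ℕ), ⋂ (n : ℕ) (_ : max M N ≤ n),
      {ω | ℓ + 1 / ((m : ℝ) + 1) < dyadicPhi w s n q ω} := by
    ext ω
    simp only [crossEvent, mem_ofPred_eq, mem_iUnion, mem_iInter, eventually_atTop]
    refine exists_congr fun m => ⟨fun ⟨M, hM⟩ => ⟨M, fun n hn => hM n (le_of_max_le_left hn)⟩,
      fun ⟨M, hM⟩ => ⟨max M N, hM⟩⟩
  rw [hset]
  exact .iUnion fun m => .iUnion fun M => .iInter fun n => .iInter fun hn =>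
    measurableSet_lt measurable_const (hmeas n (le_of_max_le_right hn))

/-- A version of `tauP w s ℓ` built from the events `crossEvent w s ℓ q`, `q` rational, each of
which is observable at every time after `q`. -/
noncomputable def tauVersion (w : Option E → ℝ) (s ℓ : ℝ) (ω : CPath E) : ℝ≥0∞ :=
  sInf {t | ∃ q : ℚ, s ≤ q ∧ t = ENNReal.ofReal q ∧ ω ∈ crossEvent w s ℓ q}

lemma tauVersion_lt_iff {w : Option E → ℝ} {s ℓ : ℝ} {ω : CPath E} {b : ℝ≥0∞} :
    tauVersion w s ℓ ω < b ↔
      ∃ q : ℚ, s ≤ q ∧ ENNReal.ofReal q < b ∧ ω ∈ crossEvent w s ℓ q := by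
  simp only [tauVersion, sInf_lt_iff, mem_ofPred_eq]
  exact ⟨fun ⟨_, ⟨q, hsq, rfl, hq⟩, hb⟩ => ⟨q, hsq, hb, hq⟩,
    fun ⟨q, hsq, hb, hq⟩ => ⟨_, ⟨q, hsq, rfl, hq⟩, hb⟩⟩

lemma tauVersion_le_ofReal {w : Option E → ℝ} {s ℓ : ℝ} {ω : CPath E} {q : ℚ} (hsq : s ≤ q)
    (hq : ω ∈ crossEvent w s ℓ q) : tauVersion w s ℓ ω ≤ ENNReal.ofReal q :=
  sInf_le ⟨q, hsq, rfl, hq⟩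

lemma measurableSet_tauVersion_lt [Countable E] (w : Option E → ℝ) {s : ℝ} (hs : 0 ≤ s)
    (ℓ r : ℝ) : MeasurableSet[natF s r] {ω : CPath E | tauVersion w s ℓ ω < ENNReal.ofReal r} := by
  have hset : {ω : CPath E | tauVersion w s ℓ ω < ENNReal.ofReal r} =
      ⋃ (q : ℚ) (_ : s ≤ q) (_ : (q : ℝ) < r), crossEvent w s ℓ q := by
    ext ω
    simp only [mem_ofPred_eq, mem_iUnion, tauVersion_lt_iff, exists_prop]
    refine exists_congr fun q => and_congr_right fun hsq => and_congr_left fun _ => ?_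
    exact ENNReal.ofReal_lt_ofReal_iff_of_nonneg (hs.trans hsq)
  rw [hset]
  exact .iUnion fun q => .iUnion fun hsq => .iUnion fun hqr => measurableSet_crossEvent w hsq hqr

lemma measurableSet_tauVersion_le [Countable E] (w : Option E → ℝ) {s : ℝ} (hs : 0 ≤ s)
    (ℓ : ℝ) {q r : ℝ} (hq : 0 ≤ q) (hqr : q < r) :
    MeasurableSet[natF s r] {ω : CPath E | tauVersion w s ℓ ω ≤ ENNReal.ofReal q} := by
  have hset : {ω : CPath E | tauVersion w s ℓ ω ≤ ENNReal.ofReal q} =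
      ⋂ (p : ℚ) (_ : q < p) (_ : (p : ℝ) < r), {ω | tauVersion w s ℓ ω < ENNReal.ofReal p} := by
    ext ω
    simp only [mem_ofPred_eq, mem_iInter]
    exact ENNReal.le_ofReal_iff_forall_rat_lt hq hqr
  rw [hset]
  exact .iInter fun p => .iInter fun _ => .iInter fun hpr =>
    natF_mono hpr.le _ (measurableSet_tauVersion_lt w hs ℓ p)

lemma tauVersion_eq_tauP {w : Option E → ℝ} {W : ℝ} (hW : ∀ j, |w j| ≤ W) {s ℓ : ℝ} (hℓ : 0 ≤ ℓ)
    {ω : CPath E} (hω : RightLocallyConstantFrom s ω) : tauVersion w s ℓ ω = tauP w s ℓ ω := by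
  refine le_antisymm (le_sInf ?_) (le_sInf ?_)
  · rintro _ ⟨u, hsu, rfl, hu⟩
    have hsu' : s < u := hsu.lt_of_ne (by rintro rfl; rw [phi_self] at hu; linarith)
    obtain ⟨a, ha, hphi⟩ := exists_Ioo_phi_gt hW hω hsu' hu
    obtain ⟨q, haq, hqu⟩ := exists_rat_btwn ha.2
    have hsq : s ≤ q := ha.1.trans haq.le
    exact (tauVersion_le_ofReal hsq ((mem_crossEvent_iff hW hsq hω).2 (hphi q ⟨haq, hqu⟩))).trans
      (ENNReal.ofReal_le_ofReal hqu.le)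
  · rintro _ ⟨q, hsq, rfl, hq⟩
    exact tauP_le_ofReal hsq ((mem_crossEvent_iff hW hsq hω).1 hq)

/-- A version of `xiP` (for `w₁ = v`, `w₂ = -v`) and of `xiM` (for `w₁ = -v`, `w₂ = v`). -/
noncomputable def xiVersion (w₁ w₂ : Option E → ℝ) (s ℓ₁ ℓ₂ : ℝ) (ω : CPath E) : ℝ≥0∞ :=
  if tauVersion w₁ s ℓ₁ ω < tauVersion w₂ s ℓ₂ ω then tauVersion w₁ s ℓ₁ ω else ∞

lemma ofReal_le_xiVersion (w₁ w₂ : Option E → ℝ) (s ℓ₁ ℓ₂ : ℝ) (ω : CPath E) :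
    ENNReal.ofReal s ≤ xiVersion w₁ w₂ s ℓ₁ ℓ₂ ω := by
  unfold xiVersion
  split_ifs
  · exact le_sInf fun _ ⟨q, hsq, hq, _⟩ => hq ▸ ENNReal.ofReal_le_ofReal hsq
  · exact le_top

lemma setOf_xiVersion_lt {w₁ w₂ : Option E → ℝ} {s : ℝ} (hs : 0 ≤ s) (ℓ₁ ℓ₂ r : ℝ) :
    {ω : CPath E | xiVersion w₁ w₂ s ℓ₁ ℓ₂ ω < ENNReal.ofReal r} =
      ⋃ (q : ℚ) (_ : s ≤ q) (_ : (q : ℝ) < r),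
        crossEvent w₁ s ℓ₁ q ∩ {ω | tauVersion w₂ s ℓ₂ ω ≤ ENNReal.ofReal q}ᶜ := by
  ext ω
  simp only [mem_ofPred_eq, mem_iUnion, mem_inter_iff, mem_compl_iff, not_le, exists_prop]
  constructor
  · intro hlt
    unfold xiVersion at hlt
    split_ifs at hlt with h12
    · obtain ⟨q, hsq, hq, hcross⟩ := tauVersion_lt_iff.1 (lt_min h12 hlt)
      exact ⟨q, hsq, (ENNReal.ofReal_lt_ofReal_iff_of_nonneg (hs.trans hsq)).1
        (hq.trans_le (min_le_right _ _)), hcross, hq.trans_le (min_le_left _ _)⟩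
    · exact absurd hlt (not_lt.2 le_top)
  · rintro ⟨q, hsq, hqr, hcross, hq⟩
    have h1 := tauVersion_le_ofReal hsq hcross
    rw [xiVersion, if_pos (h1.trans_lt hq)]
    exact h1.trans_lt ((ENNReal.ofReal_lt_ofReal_iff_of_nonneg (hs.trans hsq)).2 hqr)

lemma isST_xiVersion [Countable E] (w₁ w₂ : Option E → ℝ) {s : ℝ} (hs : 0 ≤ s) (ℓ₁ ℓ₂ : ℝ) :
    IsST s (xiVersion (E := E) w₁ w₂ s ℓ₁ ℓ₂) := by
  refine isST_of_measurableSet_lt fun p => ?_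
  rw [setOf_xiVersion_lt hs]
  exact .iUnion fun q => .iUnion fun hsq => .iUnion fun hqp =>
    (measurableSet_crossEvent w₁ hsq hqp).inter
      (measurableSet_tauVersion_le w₂ hs ℓ₂ (hs.trans hsq) hqp).compl

lemma xiVersion_eq_xiP {v : Option E → ℝ} {W : ℝ} (hW : ∀ j, |v j| ≤ W) {s ℓm ℓp : ℝ}
    (hℓm : 0 ≤ ℓm) (hℓp : 0 ≤ ℓp) {ω : CPath E} (hω : RightLocallyConstantFrom s ω) :
    xiVersion v (-v) s ℓp ℓm ω = xiP v ℓm ℓp s ω := by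
  rw [xiVersion, xiP, tauVersion_eq_tauP hW hℓp hω,
    tauVersion_eq_tauP (abs_neg_apply_le hW) hℓm hω, tauM_eq_tauP_neg]

lemma xiVersion_eq_xiM {v : Option E → ℝ} {W : ℝ} (hW : ∀ j, |v j| ≤ W) {s ℓm ℓp : ℝ}
    (hℓm : 0 ≤ ℓm) (hℓp : 0 ≤ ℓp) {ω : CPath E} (hω : RightLocallyConstantFrom s ω) :
    xiVersion (-v) v s ℓm ℓp ω = xiM v ℓm ℓp s ω := by
  rw [xiVersion, xiM, tauVersion_eq_tauP hW hℓp hω,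
    tauVersion_eq_tauP (abs_neg_apply_le hW) hℓm hω, tauM_eq_tauP_neg]

end Version

section Observable

noncomputable def obsBefore (h : Option E → ℝ) (T : ℝ) (t : ℝ≥0∞) (ω : CPath E) : ℝ :=
  if t ≠ ∞ ∧ t.toReal ≤ T then h (ω T) else 0

variable {h : Option E → ℝ} {T : ℝ}

@[simp]
lemma obsBefore_top (ω : CPath E) : obsBefore h T ∞ ω = 0 := by
  simp [obsBefore]

lemma measurable_obsBefore : Measurable (Function.uncurry (obsBefore (E := E) h T)) :=
  Measurable.ite (measurable_fst ((measurableSet_singleton ∞).compl.inter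
      (ENNReal.measurable_toReal measurableSet_Iic)))
    (Measurable.of_discrete.comp ((measurable_pi_apply T).comp measurable_snd)) measurable_const

lemma abs_obsBefore_le {C : ℝ} (hC : ∀ j, |h j| ≤ C) (t : ℝ≥0∞) (ω : CPath E) :
    |obsBefore h T t ω| ≤ C := by
  unfold obsBefore
  split_ifs
  · exact hC _
  · simpa using (abs_nonneg _).trans (hC none)

lemma obsBefore_ofReal_congr {t : ℝ} {ω ω' : CPath E} (hωω' : ∀ u, t ≤ u → ω u = ω' u) :
    obsBefore h T (ENNReal.ofReal t) ω = obsBefore h T (ENNReal.ofReal t) ω' := by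
  unfold obsBefore
  split_ifs with ht
  · refine congrArg h (hωω' T (le_trans ?_ ht.2))
    rw [ENNReal.toReal_ofReal']
    exact le_max_left t 0
  · rfl

lemma integral_obsBefore (P : ℝ → Option E → Measure (CPath E)) (t : ℝ≥0∞) (j : Option E) :
    ∫ ω, obsBefore h T t ω ∂P t.toReal j = kFun P h T t j := by
  unfold obsBefore kFun
  split_ifs <;> simp

@[simp]
lemma kFun_top (P : ℝ → Option E → Measure (CPath E)) (j : Option E) : kFun P h T ∞ j = 0 := by
  simp [kFun]

lemma indicator_le_ofReal_eq_obsBefore (hT : 0 ≤ T) (τ : CPath E → ℝ≥0∞) (ω : CPath E) :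
    {ω' | τ ω' ≤ ENNReal.ofReal T}.indicator (fun ω' => h (ω' T)) ω = obsBefore h T (τ ω) ω := by
  by_cases hτ : τ ω = ∞
  · simp [hτ, indicator]
  · simp [indicator, obsBefore, hτ, ENNReal.le_ofReal_iff_toReal_le hτ hT]

lemma integrable_obsBefore {μ : Measure (CPath E)} [IsFiniteMeasure μ] {C : ℝ}
    (hC : ∀ j, |h j| ≤ C) {τ : CPath E → ℝ≥0∞} (hτ : Measurable τ) :
    Integrable (fun ω => obsBefore h T (τ ω) ω) μ :=
  .of_bound (measurable_obsBefore.comp (hτ.prodMk measurable_id)).aestronglyMeasurable C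
    (ae_of_all _ fun _ => (Real.norm_eq_abs _).trans_le (abs_obsBefore_le hC _ _))

lemma MarkovFamily.integral_obsBefore_stoppingTime {v : Option E → ℝ} (M : MarkovFamily E v)
    {s : ℝ} (hs : 0 ≤ s) (j : Option E) {C : ℝ} (hC : ∀ j, |h j| ≤ C) {τ : CPath E → ℝ≥0∞}
    (hτ : IsST s τ) (hsτ : ∀ ω, ENNReal.ofReal s ≤ τ ω) :
    ∫ ω, obsBefore h T (τ ω) ω ∂M.P s j = ∫ ω, kFun M.P h T (τ ω) (ω (τ ω).toReal) ∂M.P s j := by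
  have := M.prob s j
  have hSM := M.strongMarkov s j hs τ hτ hsτ (obsBefore h T) measurable_obsBefore
    ⟨C, abs_obsBefore_le hC⟩ fun _ _ _ => obsBefore_ofReal_congr
  have hindicator : ∀ {f : CPath E → ℝ}, (∀ ω, τ ω = ∞ → f ω = 0) → {ω | τ ω ≠ ∞}.indicator f = f :=
    fun hf => indicator_eq_self.2 fun ω hω hτω => hω (hf ω hτω)
  simp only [integral_obsBefore] at hSM
  rw [hindicator fun ω hω => by simp [hω], hindicator fun ω hω => by simp [hω]] at hSM
  exact (integral_condExp (stoppedSigma_le_pi hτ)).symm.trans (integral_congr_ae hSM)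

end Observable

section Exit

lemma add_ite_lt_eq_min {F : ℝ≥0∞ → ℝ} (hF : F ∞ = 0) {a b : ℝ≥0∞} (hab : a = b → a = ∞) :
    F (if a < b then a else ∞) + F (if b < a then b else ∞) = F (min a b) := by
  rcases lt_trichotomy a b with h | rfl | h
  · simp [h, h.not_gt, hF, min_eq_left h.le]
  · simp [hab rfl, hF]
  · simp [h, h.not_gt, hF, min_eq_right h.le]

variable {v : Option E → ℝ} {W : ℝ} {s ℓm ℓp : ℝ} {ω : CPath E}

lemma apply_xiP_pos (hW : ∀ j, |v j| ≤ W) (hs : 0 ≤ s) (hℓp : 0 ≤ ℓp)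
    (hω : RightLocallyConstantFrom s ω) (hne : xiP v ℓm ℓp s ω ≠ ∞) :
    0 < v (ω (xiP v ℓm ℓp s ω).toReal) := by
  unfold xiP at hne ⊢
  split_ifs at hne ⊢
  · exact apply_tauP_pos hW hs hℓp hω hne
  · exact absurd rfl hne

lemma apply_xiM_neg (hW : ∀ j, |v j| ≤ W) (hs : 0 ≤ s) (hℓm : 0 ≤ ℓm)
    (hω : RightLocallyConstantFrom s ω) (hne : xiM v ℓm ℓp s ω ≠ ∞) :
    v (ω (xiM v ℓm ℓp s ω).toReal) < 0 := by
  unfold xiM at hne ⊢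
  split_ifs at hne ⊢
  · rw [tauM_eq_tauP_neg] at hne ⊢
    exact neg_pos.1 (apply_tauP_pos (abs_neg_apply_le hW) hs hℓm hω hne)
  · exact absurd rfl hne

variable {g : ℝ≥0∞ → Option E → ℝ} {t : ℝ≥0∞}

lemma restrP_Xat (hv0 : v none = 0) (hg : ∀ j, g ∞ j = 0)
    (ht : t ≠ ∞ → 0 < v (ω t.toReal)) : restrP v g t (Xat t ω) = g t (ω t.toReal) := by
  rcases eq_or_ne t ∞ with rfl | hne
  · simp [Xat, restrP, hg]
  rw [Xat, if_neg hne]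
  have hpos := ht hne
  cases hωt : ω t.toReal with
  | none => rw [hωt, hv0] at hpos; exact absurd hpos (lt_irrefl 0)
  | some e => rw [hωt] at hpos; simp [restrP, hpos, hne]

lemma restrM_Xat (hv0 : v none = 0) (hg : ∀ j, g ∞ j = 0)
    (ht : t ≠ ∞ → v (ω t.toReal) < 0) : restrM v g t (Xat t ω) = g t (ω t.toReal) := by
  rcases eq_or_ne t ∞ with rfl | hne
  · simp [Xat, restrM, hg]
  rw [Xat, if_neg hne]
  have hneg := ht hne
  cases hωt : ω t.toReal with
  | none => rw [hωt, hv0] at hneg; exact absurd hneg (lt_irrefl 0)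
  | some e => rw [hωt] at hneg; simp [restrM, hneg, hne]

lemma obsBefore_min_eq_add {h : Option E → ℝ} {T : ℝ} (hW : ∀ j, |v j| ≤ W) (hs : 0 ≤ s)
    (hℓm : 0 ≤ ℓm) (hℓp : 0 ≤ ℓp) (hω : RightLocallyConstantFrom s ω) :
    obsBefore h T (min (tauM v s ℓm ω) (tauP v s ℓp ω)) ω =
      obsBefore h T (xiVersion v (-v) s ℓp ℓm ω) ω
        + obsBefore h T (xiVersion (-v) v s ℓm ℓp ω) ω := by
  rw [min_comm, xiVersion_eq_xiP hW hℓm hℓp hω, xiVersion_eq_xiM hW hℓm hℓp hω]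
  exact (add_ite_lt_eq_min (F := (obsBefore h T · ω)) (obsBefore_top ω)
    (tauP_eq_top_of_eq_tauM hW hs hℓm hℓp hω)).symm

variable {P : ℝ → Option E → Measure (CPath E)} {h : Option E → ℝ} {T : ℝ}

lemma kFun_xiVersion_eq_restrP (hv0 : v none = 0) (hW : ∀ j, |v j| ≤ W) (hs : 0 ≤ s)
    (hℓm : 0 ≤ ℓm) (hℓp : 0 ≤ ℓp) (hω : RightLocallyConstantFrom s ω) :
    kFun P h T (xiVersion v (-v) s ℓp ℓm ω) (ω (xiVersion v (-v) s ℓp ℓm ω).toReal) =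
      restrP v (kFun P h T) (xiP v ℓm ℓp s ω) (Xat (xiP v ℓm ℓp s ω) ω) := by
  rw [xiVersion_eq_xiP hW hℓm hℓp hω, restrP_Xat hv0 (kFun_top P) (apply_xiP_pos hW hs hℓp hω)]

lemma kFun_xiVersion_eq_restrM (hv0 : v none = 0) (hW : ∀ j, |v j| ≤ W) (hs : 0 ≤ s)
    (hℓm : 0 ≤ ℓm) (hℓp : 0 ≤ ℓp) (hω : RightLocallyConstantFrom s ω) :
    kFun P h T (xiVersion (-v) v s ℓm ℓp ω) (ω (xiVersion (-v) v s ℓm ℓp ω).toReal) =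
      restrM v (kFun P h T) (xiM v ℓm ℓp s ω) (Xat (xiM v ℓm ℓp s ω) ω) := by
  rw [xiVersion_eq_xiM hW hℓm hℓp hω, restrM_Xat hv0 (kFun_top P) (apply_xiM_neg hW hs hℓm hω)]

end Exit

end LawBeforeExit

open LawBeforeExit in
theorem law_before_exit_time_general
    {E : Type*} [Fintype E] (v : Option E → ℝ)
    (hv0 : v none = 0)
    (M : MarkovFamily E v)
    (h : Option E → ℝ) (hbdd : ∃ C, ∀ j, |h j| ≤ C)
    (T : ℝ) (hT : 0 ≤ T)
    (ℓm ℓp : ℝ) (hℓm : 0 ≤ ℓm) (hℓp : 0 ≤ ℓp) (s : ℝ) (hs : 0 ≤ s) (i : E) :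
    ∫ ω, Set.indicator {ω' : CPath E |
          min (tauM v s ℓm ω') (tauP v s ℓp ω') ≤ ENNReal.ofReal T}
        (fun ω' => h (ω' T)) ω ∂ M.P s (some i)
      = opXiP M.P v ℓm ℓp (restrP v (kFun M.P h T)) s (some i)
        + opXiM M.P v ℓm ℓp (restrM v (kFun M.P h T)) s (some i) := by
  obtain ⟨C, hC⟩ := hbdd
  have hW : ∀ j, |v j| ≤ ∑ j, |v j| := fun j =>
    Finset.single_le_sum (fun j _ => abs_nonneg (v j)) (Finset.mem_univ j)
  have := M.prob s (some i)
  have hreg : ∀ᵐ ω ∂M.P s (some i), RightLocallyConstantFrom s ω :=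
    (M.pathReg s (some i) hs).mono fun _ hω => hω.1
  set ξp := xiVersion v (-v) s ℓp ℓm
  set ξm := xiVersion (-v) v s ℓm ℓp
  have hξp : IsST s ξp := isST_xiVersion v (-v) hs ℓp ℓm
  have hξm : IsST s ξm := isST_xiVersion (-v) v hs ℓm ℓp
  calc _ = ∫ ω, obsBefore h T (ξp ω) ω + obsBefore h T (ξm ω) ω ∂M.P s (some i) :=
        integral_congr_ae <| hreg.mono fun ω hω => by
          rw [indicator_le_ofReal_eq_obsBefore hT]
          exact obsBefore_min_eq_add hW hs hℓm hℓp hω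
    _ = ∫ ω, kFun M.P h T (ξp ω) (ω (ξp ω).toReal) ∂M.P s (some i)
        + ∫ ω, kFun M.P h T (ξm ω) (ω (ξm ω).toReal) ∂M.P s (some i) := by
        rw [integral_add (integrable_obsBefore hC hξp.measurable)
            (integrable_obsBefore hC hξm.measurable),
          M.integral_obsBefore_stoppingTime hs _ hC hξp (ofReal_le_xiVersion _ _ _ _ _),
          M.integral_obsBefore_stoppingTime hs _ hC hξm (ofReal_le_xiVersion _ _ _ _ _)]
    _ = _ := congrArg₂ (· + ·)
        (integral_congr_ae <| hreg.mono fun ω hω => kFun_xiVersion_eq_restrP hv0 hW hs hℓm hℓp hω)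
        (integral_congr_ae <| hreg.mono fun ω hω => kFun_xiVersion_eq_restrM hv0 hW hs hℓm hℓp hω)

/-- (Proposition 3.4: law of the chain before the exit time.) For bounded
`h : Ē → ℝ` with `h(∂) = 0`, with `k^±(t,j) = 1_{[0,T]}(t) 𝔼_{t,j}[h(X_T)]` on `X̄_±`:
`𝔼_{s,i}[h(X_T) 1_{τ_{ℓ⁻}⁻(s) ∧ τ_{ℓ⁺}⁺(s) ≤ T}] = (Ξ⁺_{ℓ⁻,ℓ⁺} k⁺)(s,i) + (Ξ⁻_{ℓ⁻,ℓ⁺} k⁻)(s,i)`. -/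
theorem law_before_exit_time
    {E : Type*} [Fintype E] (hcard : 1 < Fintype.card E) (v : Option E → ℝ)
    (hv : ∀ e : E, v (some e) ≠ 0) (hv0 : v none = 0)
    (hEp : ∃ e : E, 0 < v (some e)) (hEm : ∃ e : E, v (some e) < 0)
    (M : MarkovFamily E v)
    (h : Option E → ℝ) (hbdd : ∃ C, ∀ j, |h j| ≤ C) (h0 : h none = 0)
    (T : ℝ) (hT : 0 ≤ T)
    (ℓm ℓp : ℝ) (hℓm : 0 ≤ ℓm) (hℓp : 0 ≤ ℓp) (s : ℝ) (hs : 0 ≤ s) (i : E) :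
    ∫ ω, Set.indicator {ω' : CPath E |
          min (tauM v s ℓm ω') (tauP v s ℓp ω') ≤ ENNReal.ofReal T}
        (fun ω' => h (ω' T)) ω ∂ M.P s (some i)
      = opXiP M.P v ℓm ℓp (restrP v (kFun M.P h T)) s (some i)
        + opXiM M.P v ℓm ℓp (restrM v (kFun M.P h T)) s (some i) :=
  law_before_exit_time_general v hv0 M h hbdd T hT ℓm ℓp hℓm hℓp s hs i
end

section
/- Let T ∈ ℝ₊ and let g⁺ ∈ B_b(X̄₊) be given by g⁺(t,j) := 1_{[0,T]}(t). Then for every ℓ⁺, ℓ⁻ ≥ 0 and every (s,i) ∈ ℝ₊ × E₊, (J⁻ 𝒫⁻_{ℓ⁻+ℓ⁺} J⁺ 𝒫⁺_{ℓ⁻+ℓ⁺} g⁺)(s,i) ≤ 1_{[0,T]}(s)·(1 − e^{−K(T−s)})². -/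
open MeasureTheory Set Filter
open scoped ENNReal

/-- The element of `B_b(X̄₊)` given by `g⁺(t,j) = 1_{[0,T]}(t)`. -/
noncomputable def indTP {E : Type*} (v : Option E → ℝ) (T : ℝ) : ℝ≥0∞ → Option E → ℝ :=
  fun t j =>
    match j with
    | none => 0
    | some e => if 0 < v (some e) ∧ t ≠ ∞ ∧ t.toReal ≤ T then 1 else 0

section Helpers

variable {E : Type*}

lemma tauP_ge (v : Option E → ℝ) (s ℓ : ℝ) (ω : CPath E) :
    ENNReal.ofReal s ≤ tauP v s ℓ ω :=
  le_sInf fun t ht => by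
    obtain ⟨u, hu, rfl, -⟩ := ht
    exact ENNReal.ofReal_le_ofReal hu

lemma tauM_ge (v : Option E → ℝ) (s ℓ : ℝ) (ω : CPath E) :
    ENNReal.ofReal s ≤ tauM v s ℓ ω :=
  le_sInf fun t ht => by
    obtain ⟨u, hu, rfl, -⟩ := ht
    exact ENNReal.ofReal_le_ofReal hu

/-- The bounding function `t ↦ 1_{[0,T]}(t) (1 - e^{-K(T-t)})`. -/
noncomputable def cKf (K T t : ℝ) : ℝ := if t ≤ T then 1 - Real.exp (-K * (T - t)) else 0

lemma cKf_nonneg {K T : ℝ} (hK : 0 ≤ K) (t : ℝ) : 0 ≤ cKf K T t := by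
  unfold cKf
  split_ifs with h
  · have h1 : -K * (T - t) ≤ 0 := by nlinarith
    have h2 : Real.exp (-K * (T - t)) ≤ Real.exp 0 := Real.exp_le_exp.2 h1
    rw [Real.exp_zero] at h2
    linarith
  · exact le_refl 0

lemma cKf_antitone {K T : ℝ} (hK : 0 ≤ K) {a b : ℝ} (hab : a ≤ b) :
    cKf K T b ≤ cKf K T a := by
  unfold cKf
  split_ifs with h1 h2 h2
  · have h3 : Real.exp (-K * (T - a)) ≤ Real.exp (-K * (T - b)) :=
      Real.exp_le_exp.2 (by nlinarith)
    linarith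
  · exact absurd (hab.trans h1) h2
  · have h3 : -K * (T - a) ≤ 0 := by nlinarith
    have h4 : Real.exp (-K * (T - a)) ≤ Real.exp 0 := Real.exp_le_exp.2 h3
    rw [Real.exp_zero] at h4
    linarith
  · exact le_refl 0

/-- Expected value of a `[0,C]`-valued function is at most `C` (no measurability needed). -/
lemma integral_le_const' {α : Type*} [MeasurableSpace α] (μ : Measure α)
    [IsProbabilityMeasure μ] {f : α → ℝ} {C : ℝ}
    (h0 : ∀ x, 0 ≤ f x) (h1 : ∀ x, f x ≤ C) : ∫ x, f x ∂μ ≤ C := by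
  have hb : ‖∫ x, f x ∂μ‖ ≤ C * (μ Set.univ).toReal := by
    refine norm_integral_le_of_norm_le_const (ae_of_all _ fun x => ?_)
    rw [Real.norm_eq_abs, abs_of_nonneg (h0 x)]
    exact h1 x
  rw [Real.norm_eq_abs] at hb
  have h2 := le_abs_self (∫ x, f x ∂μ)
  simp only [measure_univ, ENNReal.toReal_one, mul_one] at hb
  linarith

/-- If `0 ≤ f ≤ C · 1_A` a.e., then `∫ f ≤ C · μ(A)`, where `μ A` may be the outer measure of a
non-measurable set. -/
lemma integral_le_indicator {α : Type*} [MeasurableSpace α] (μ : Measure α)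
    [IsProbabilityMeasure μ] {f : α → ℝ} {A : Set α} {C : ℝ} (hC : 0 ≤ C)
    (h0 : ∀ᵐ x ∂μ, 0 ≤ f x)
    (h1 : ∀ᵐ x ∂μ, f x ≤ A.indicator (fun _ => C) x) :
    ∫ x, f x ∂μ ≤ C * (μ A).toReal := by
  by_cases hf : Integrable f μ
  · rw [integral_eq_lintegral_of_nonneg_ae h0 hf.aestronglyMeasurable]
    have hb : ∫⁻ x, ENNReal.ofReal (f x) ∂μ ≤ ENNReal.ofReal C * μ A := by
      refine le_trans (lintegral_mono_ae ?_) (lintegral_indicator_const_le A (ENNReal.ofReal C))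
      filter_upwards [h1] with x hx
      by_cases hxA : x ∈ A
      · rw [Set.indicator_of_mem hxA] at hx ⊢
        exact ENNReal.ofReal_le_ofReal hx
      · rw [Set.indicator_of_notMem hxA] at hx ⊢
        simpa [ENNReal.ofReal_eq_zero] using hx
    have hne : ENNReal.ofReal C * μ A ≠ ∞ :=
      ENNReal.mul_ne_top ENNReal.ofReal_ne_top (measure_ne_top _ _)
    calc (∫⁻ x, ENNReal.ofReal (f x) ∂μ).toReal
        ≤ (ENNReal.ofReal C * μ A).toReal := ENNReal.toReal_mono hne hb
      _ = C * (μ A).toReal := by rw [ENNReal.toReal_mul, ENNReal.toReal_ofReal hC]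
  · rw [integral_undef hf]
    exact mul_nonneg hC ENNReal.toReal_nonneg

lemma intervalIntegral_ge_neg {f : ℝ → ℝ} {K a b : ℝ} (hK : 0 ≤ K) (hab : a ≤ b)
    (hf : ∀ u, |f u| ≤ K) : -K * (b - a) ≤ ∫ u in a..b, f u := by
  by_cases h : IntervalIntegrable f MeasureTheory.volume a b
  · have hmono := intervalIntegral.integral_mono_on (f := fun _ => -K) (g := f) hab
      intervalIntegrable_const h (fun u _ => neg_le_of_abs_le (hf u))
    rw [intervalIntegral.integral_const, smul_eq_mul] at hmono
    nlinarith [hmono]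
  · rw [intervalIntegral.integral_undef h]
    nlinarith

/-- If `ω` is constant equal to `j` on `[s, T+ε)` with `v j ≤ 0`, then `φ` cannot exceed `0`
by time `T`. -/
lemma tauP_gt_of_const {v : Option E → ℝ} {s T ε : ℝ} {ω : CPath E} {j : Option E}
    (hsT : s ≤ T) (hT : 0 ≤ T) (hε : 0 < ε)
    (hconst : ∀ u, s ≤ u → u < T + ε → ω u = j) (hvj : v j ≤ 0) :
    ENNReal.ofReal T < tauP v s 0 ω := by
  have hle : ENNReal.ofReal (T + ε) ≤ tauP v s 0 ω := by
    refine le_sInf fun t ht => ?_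
    obtain ⟨u, hsu, rfl, hφ⟩ := ht
    by_contra hlt
    rw [not_le] at hlt
    have hu : u < T + ε := (ENNReal.ofReal_lt_ofReal_iff (by linarith)).1 hlt
    have hphi : phi v s u ω = (u - s) * v j := by
      unfold phi
      have heq : Set.EqOn (fun r => v (ω r)) (fun _ => v j) (Set.uIcc s u) := by
        intro r hr
        rw [Set.uIcc_of_le hsu] at hr
        exact congrArg v (hconst r hr.1 (lt_of_le_of_lt hr.2 hu))
      rw [intervalIntegral.integral_congr heq, intervalIntegral.integral_const, smul_eq_mul]
    rw [hphi] at hφ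
    nlinarith [hφ]
  refine lt_of_lt_of_le ((ENNReal.ofReal_lt_ofReal_iff (by linarith)).2 (by linarith)) hle

/-- If `ω` is constant equal to `j` on `[s, T+ε)` with `v j ≥ 0`, then `φ` cannot drop below `0`
by time `T`. -/
lemma tauM_gt_of_const {v : Option E → ℝ} {s T ε : ℝ} {ω : CPath E} {j : Option E}
    (hsT : s ≤ T) (hT : 0 ≤ T) (hε : 0 < ε)
    (hconst : ∀ u, s ≤ u → u < T + ε → ω u = j) (hvj : 0 ≤ v j) :
    ENNReal.ofReal T < tauM v s 0 ω := by
  have hle : ENNReal.ofReal (T + ε) ≤ tauM v s 0 ω := by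
    refine le_sInf fun t ht => ?_
    obtain ⟨u, hsu, rfl, hφ⟩ := ht
    by_contra hlt
    rw [not_le] at hlt
    have hu : u < T + ε := (ENNReal.ofReal_lt_ofReal_iff (by linarith)).1 hlt
    have hphi : phi v s u ω = (u - s) * v j := by
      unfold phi
      have heq : Set.EqOn (fun r => v (ω r)) (fun _ => v j) (Set.uIcc s u) := by
        intro r hr
        rw [Set.uIcc_of_le hsu] at hr
        exact congrArg v (hconst r hr.1 (lt_of_le_of_lt hr.2 hu))
      rw [intervalIntegral.integral_congr heq, intervalIntegral.integral_const, smul_eq_mul]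
    rw [hphi, neg_zero] at hφ
    nlinarith [hφ]
  refine lt_of_lt_of_le ((ENNReal.ofReal_lt_ofReal_iff (by linarith)).2 (by linarith)) hle

/-- For a regular path starting in `E₋`, an upcrossing of level `0` before time `T` forces a
jump before time `T`. -/
lemma gamma_le_of_tauP {v : Option E → ℝ} {s T : ℝ} {ω : CPath E}
    (hs : 0 ≤ s) (hT : 0 ≤ T)
    (hreg : ∀ t, s ≤ t → ∃ ε > 0, ∀ u ∈ Set.Ico t (t + ε), ω u = ω t)
    (hvs : v (ω s) ≤ 0) (h : tauP v s 0 ω ≤ ENNReal.ofReal T) :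
    gammaJump s ω ≤ ENNReal.ofReal T := by
  by_contra hγ
  rw [not_le] at hγ
  have hsT : s ≤ T := (ENNReal.ofReal_le_ofReal_iff hT).1 ((tauP_ge v s 0 ω).trans h)
  have hconst1 : ∀ u, s ≤ u → u ≤ T → ω u = ω s := by
    intro u h1 h2
    by_contra hne
    have hmem : ENNReal.ofReal u ∈
        {t : ℝ≥0∞ | ∃ u' : ℝ, s ≤ u' ∧ t = ENNReal.ofReal u' ∧ ω u' ≠ ω s} :=
      ⟨u, h1, rfl, hne⟩
    have h4 : gammaJump s ω ≤ ENNReal.ofReal u := sInf_le hmem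
    exact absurd (h4.trans (ENNReal.ofReal_le_ofReal h2)) (not_le.2 hγ)
  obtain ⟨ε, hε, hconst2⟩ := hreg T hsT
  have hconst : ∀ u, s ≤ u → u < T + ε → ω u = ω s := by
    intro u h1 h2
    rcases le_or_gt u T with h3 | h3
    · exact hconst1 u h1 h3
    · rw [hconst2 u ⟨h3.le, h2⟩, hconst1 T hsT le_rfl]
  exact absurd h (not_le.2 (tauP_gt_of_const hsT hT hε hconst hvs))

/-- For a regular path starting in `E₊`, a downcrossing of level `0` before time `T` forces a
jump before time `T`. -/
lemma gamma_le_of_tauM {v : Option E → ℝ} {s T : ℝ} {ω : CPath E}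
    (hs : 0 ≤ s) (hT : 0 ≤ T)
    (hreg : ∀ t, s ≤ t → ∃ ε > 0, ∀ u ∈ Set.Ico t (t + ε), ω u = ω t)
    (hvs : 0 ≤ v (ω s)) (h : tauM v s 0 ω ≤ ENNReal.ofReal T) :
    gammaJump s ω ≤ ENNReal.ofReal T := by
  by_contra hγ
  rw [not_le] at hγ
  have hsT : s ≤ T := (ENNReal.ofReal_le_ofReal_iff hT).1 ((tauM_ge v s 0 ω).trans h)
  have hconst1 : ∀ u, s ≤ u → u ≤ T → ω u = ω s := by
    intro u h1 h2
    by_contra hne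
    have hmem : ENNReal.ofReal u ∈
        {t : ℝ≥0∞ | ∃ u' : ℝ, s ≤ u' ∧ t = ENNReal.ofReal u' ∧ ω u' ≠ ω s} :=
      ⟨u, h1, rfl, hne⟩
    have h4 : gammaJump s ω ≤ ENNReal.ofReal u := sInf_le hmem
    exact absurd (h4.trans (ENNReal.ofReal_le_ofReal h2)) (not_le.2 hγ)
  obtain ⟨ε, hε, hconst2⟩ := hreg T hsT
  have hconst : ∀ u, s ≤ u → u < T + ε → ω u = ω s := by
    intro u h1 h2
    rcases le_or_gt u T with h3 | h3
    · exact hconst1 u h1 h3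
    · rw [hconst2 u ⟨h3.le, h2⟩, hconst1 T hsT le_rfl]
  exact absurd h (not_le.2 (tauM_gt_of_const hsT hT hε hconst hvs))

/-- Generic bound for `applyAt`: if `g` is `[0, φ(t)]`-valued with `φ` nonincreasing and `g` zero
at time `∞`, and if the random time `σ(s)` is `≥ s`, then `applyAt P σ g` is `[0, φ(t)]`-valued. -/
lemma applyAt_bound (P : ℝ → Option E → Measure (CPath E))
    (hP : ∀ s j, IsProbabilityMeasure (P s j)) (σ : ℝ → CPath E → ℝ≥0∞)
    (hσ : ∀ s ω, ENNReal.ofReal s ≤ σ s ω)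
    (g : ℝ≥0∞ → Option E → ℝ) (φ : ℝ → ℝ)
    (hφ0 : ∀ t, 0 ≤ φ t)
    (hφa : ∀ a b : ℝ, a ≤ b → φ b ≤ φ a)
    (hg0 : ∀ t j, 0 ≤ g t j)
    (hg : ∀ t j, t ≠ ∞ → g t j ≤ φ t.toReal)
    (hginf : ∀ j, g ∞ j = 0) :
    ∀ t j, 0 ≤ applyAt P σ g t j ∧ (t ≠ ∞ → applyAt P σ g t j ≤ φ t.toReal) := by
  intro t j
  unfold applyAt
  by_cases ht : t = ∞
  · simp [ht, hφ0]
  · simp only [if_neg ht]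
    haveI := hP t.toReal j
    refine ⟨integral_nonneg fun ω => hg0 _ _, fun _ => ?_⟩
    refine integral_le_const' _ (fun ω => hg0 _ _) (fun ω => ?_)
    by_cases hσω : σ t.toReal ω = ∞
    · rw [hσω, hginf]
      exact hφ0 _
    · refine (hg _ _ hσω).trans (hφa _ _ ?_)
      exact (ENNReal.ofReal_le_iff_le_toReal hσω).1 (hσ t.toReal ω)

lemma restrP_cases (v : Option E → ℝ) (F : ℝ≥0∞ → Option E → ℝ) (t : ℝ≥0∞) (j : Option E) :
    restrP v F t j = 0 ∨ restrP v F t j = F t j := by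
  unfold restrP
  match j with
  | none => exact Or.inl rfl
  | some e =>
    by_cases h : 0 < v (some e) ∧ t ≠ ∞
    · exact Or.inr (if_pos h)
    · exact Or.inl (if_neg h)

lemma restrM_cases (v : Option E → ℝ) (F : ℝ≥0∞ → Option E → ℝ) (t : ℝ≥0∞) (j : Option E) :
    restrM v F t j = 0 ∨
      ∃ e : E, j = some e ∧ v (some e) < 0 ∧ t ≠ ∞ ∧ restrM v F t j = F t j := by
  unfold restrM
  match j with
  | none => exact Or.inl rfl
  | some e =>
    by_cases h : v (some e) < 0 ∧ t ≠ ∞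
    · exact Or.inr ⟨e, rfl, h.1, h.2, if_pos h⟩
    · exact Or.inl (if_neg h)

lemma restrP_inf (v : Option E → ℝ) (F : ℝ≥0∞ → Option E → ℝ) (j : Option E) :
    restrP v F ∞ j = 0 := by
  unfold restrP
  match j with
  | none => rfl
  | some e => exact if_neg (by simp)

lemma restrM_inf (v : Option E → ℝ) (F : ℝ≥0∞ → Option E → ℝ) (j : Option E) :
    restrM v F ∞ j = 0 := by
  unfold restrM
  match j with
  | none => rfl
  | some e => exact if_neg (by simp)

lemma cKf_of_le {K T t : ℝ} (h : t ≤ T) : cKf K T t = 1 - Real.exp (-K * (T - t)) := by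
  unfold cKf; rw [if_pos h]

lemma cKf_of_gt {K T t : ℝ} (h : T < t) : cKf K T t = 0 := by
  unfold cKf; rw [if_neg (not_le.2 h)]

/-- The step function `1_{(-∞,T]}`. -/
noncomputable def stepf (T t : ℝ) : ℝ := if t ≤ T then 1 else 0

lemma stepf_nonneg (T t : ℝ) : 0 ≤ stepf T t := by
  unfold stepf; split_ifs <;> norm_num

lemma stepf_le_one (T t : ℝ) : stepf T t ≤ 1 := by
  unfold stepf; split_ifs <;> norm_num

lemma stepf_antitone {T a b : ℝ} (hab : a ≤ b) : stepf T b ≤ stepf T a := by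
  unfold stepf
  split_ifs with h1 h2 h2
  · exact le_refl 1
  · exact absurd (hab.trans h1) h2
  · norm_num
  · exact le_refl 0

lemma stepf_of_le {T t : ℝ} (h : t ≤ T) : stepf T t = 1 := by
  unfold stepf; rw [if_pos h]

lemma stepf_of_gt {T t : ℝ} (h : T < t) : stepf T t = 0 := by
  unfold stepf; rw [if_neg (not_le.2 h)]

/-- Almost surely, the path starts at the prescribed initial state. -/
lemma init_ae {v : Option E → ℝ} (M : MarkovFamily E v) {s : ℝ} (hs : 0 ≤ s) (j : Option E) :
    ∀ᵐ ω ∂ M.P s j, ω s = j := by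
  haveI := M.prob s j
  have hm : MeasurableSet {ω : CPath E | ω s = j} := by
    have he : {ω : CPath E | ω s = j} = (fun ω : CPath E => ω s) ⁻¹' {j} := by
      ext ω; simp
    rw [he]
    exact measurable_pi_apply s MeasurableSpace.measurableSet_top
  refine ae_iff.2 ?_
  have hcmp : {ω : CPath E | ¬ ω s = j} = {ω : CPath E | ω s = j}ᶜ := rfl
  rw [hcmp, measure_compl hm (measure_ne_top _ _), M.init s j hs, measure_univ]
  simp

/-- Almost surely, the path is locally constant from the right on `[s,∞)`. -/
lemma reg_ae {v : Option E → ℝ} (M : MarkovFamily E v) {s : ℝ} (hs : 0 ≤ s) (j : Option E) :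
    ∀ᵐ ω ∂ M.P s j, ∀ r, s ≤ r → ∃ ε > 0, ∀ u ∈ Set.Ico r (r + ε), ω u = ω r :=
  (M.pathReg s j hs).mono fun ω h => h.1

end Helpers

/-- (Lemma 4.1.) For `g⁺(t,j) = 1_{[0,T]}(t)` and `(s,i) ∈ ℝ₊ × E₊`:
`(J⁻ 𝒫⁻_{ℓ⁻+ℓ⁺} J⁺ 𝒫⁺_{ℓ⁻+ℓ⁺} g⁺)(s,i) ≤ 1_{[0,T]}(s) (1 - e^{-K(T-s)})²`. -/
theorem composite_operator_indicator_bound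
    {E : Type*} [Fintype E] (hcard : 1 < Fintype.card E) (v : Option E → ℝ)
    (hv : ∀ e : E, v (some e) ≠ 0) (hv0 : v none = 0)
    (hEp : ∃ e : E, 0 < v (some e)) (hEm : ∃ e : E, v (some e) < 0)
    (M : MarkovFamily E v) (K : ℝ) (GA : GenAssumption E v M K)
    (T : ℝ) (hT : 0 ≤ T)
    (ℓm ℓp : ℝ) (hℓm : 0 ≤ ℓm) (hℓp : 0 ≤ ℓp)
    (s : ℝ) (hs : 0 ≤ s) (i : E) (hi : 0 < v (some i)) :
    opJM M.P v (opM M.P v (ℓm + ℓp) (opJP M.P v (opP M.P v (ℓm + ℓp) (indTP v T))))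
        (ENNReal.ofReal s) (some i)
      ≤ if s ≤ T then (1 - Real.exp (-K * (T - s))) ^ 2 else 0 := by
  classical
  have hP := M.prob
  have hKnn : (0:ℝ) ≤ K := GA.hK.le
  set ℓ := ℓm + ℓp with hℓdef
  -- bounds on g⁺ = indTP v T
  have hg00 : ∀ (t : ℝ≥0∞) (j : Option E), 0 ≤ indTP v T t j := by
    intro t j
    match j with
    | none => exact le_refl 0
    | some e =>
      show (0:ℝ) ≤ if 0 < v (some e) ∧ t ≠ ∞ ∧ t.toReal ≤ T then 1 else 0
      split_ifs <;> norm_num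
  have hg0b : ∀ (t : ℝ≥0∞) (j : Option E), t ≠ ∞ → indTP v T t j ≤ stepf T t.toReal := by
    intro t j ht
    match j with
    | none => exact stepf_nonneg T _
    | some e =>
      show (if 0 < v (some e) ∧ t ≠ ∞ ∧ t.toReal ≤ T then (1:ℝ) else 0) ≤ stepf T t.toReal
      split_ifs with h
      · rw [stepf_of_le h.2.2]
      · exact stepf_nonneg T _
  have hg0inf : ∀ j : Option E, indTP v T ∞ j = 0 := by
    intro j
    match j with
    | none => rfl
    | some e =>
      show (if 0 < v (some e) ∧ (∞:ℝ≥0∞) ≠ ∞ ∧ (∞:ℝ≥0∞).toReal ≤ T then (1:ℝ) else 0) = 0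
      simp
  -- g1 = 𝒫⁺ g⁺
  set g1 := opP M.P v ℓ (indTP v T) with hg1def
  have hA1 := applyAt_bound M.P hP (fun r => tauP v r ℓ) (fun r ω => tauP_ge v r ℓ ω)
    (indTP v T) (stepf T) (stepf_nonneg T) (fun a b hab => stepf_antitone hab) hg00 hg0b hg0inf
  have hg1 : ∀ (t : ℝ≥0∞) (j : Option E),
      0 ≤ g1 t j ∧ (t ≠ ∞ → g1 t j ≤ stepf T t.toReal) := by
    intro t j
    have e1 : g1 t j = restrP v (applyAt M.P (fun r => tauP v r ℓ) (indTP v T)) t j := rfl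
    rcases restrP_cases v (applyAt M.P (fun r => tauP v r ℓ) (indTP v T)) t j with h | h
    · rw [e1, h]
      exact ⟨le_refl 0, fun _ => stepf_nonneg T _⟩
    · rw [e1, h]
      exact hA1 t j
  have hg1inf : ∀ j : Option E, g1 ∞ j = 0 := fun j => restrP_inf v _ j
  have hg1le1 : ∀ (t : ℝ≥0∞) (j : Option E), g1 t j ≤ 1 := by
    intro t j
    rcases eq_or_ne t ∞ with rfl | ht
    · rw [hg1inf]; norm_num
    · exact ((hg1 t j).2 ht).trans (stepf_le_one T _)
  -- g2 = J⁺ g1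
  set g2 := opJP M.P v g1 with hg2def
  have hF2 : ∀ (t : ℝ≥0∞) (e : E), t ≠ ∞ → v (some e) < 0 →
      applyAt M.P (fun r => tauP v r 0) g1 t (some e) ≤ cKf K T t.toReal := by
    intro t e ht hve
    set t' := t.toReal with ht'def
    have h0t : 0 ≤ t' := ENNReal.toReal_nonneg
    have happ : applyAt M.P (fun r => tauP v r 0) g1 t (some e)
        = ∫ ω, g1 (tauP v t' 0 ω) (Xat (tauP v t' 0 ω) ω) ∂ M.P t' (some e) := by
      unfold applyAt; rw [if_neg ht]
    rw [happ]
    haveI := hP t' (some e)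
    rcases le_or_gt t' T with h' | h'
    · -- main case : a crossing needs a jump, use the jump law
      have hbound : ∀ᵐ ω ∂ M.P t' (some e),
          g1 (tauP v t' 0 ω) (Xat (tauP v t' 0 ω) ω)
            ≤ ({ω : CPath E | gammaJump t' ω ≤ ENNReal.ofReal T}).indicator
                (fun _ => (1:ℝ)) ω := by
        filter_upwards [init_ae M h0t (some e), reg_ae M h0t (some e)] with ω hω1 hω2
        by_cases hωA : ω ∈ {ω : CPath E | gammaJump t' ω ≤ ENNReal.ofReal T}
        · rw [Set.indicator_of_mem hωA]
          exact hg1le1 _ _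
        · rw [Set.indicator_of_notMem hωA]
          have hτ : ¬ tauP v t' 0 ω ≤ ENNReal.ofReal T := fun hle =>
            hωA (gamma_le_of_tauP h0t hT hω2 (by rw [hω1]; exact hve.le) hle)
          rcases eq_or_ne (tauP v t' 0 ω) ∞ with h | h
          · rw [h, hg1inf]
          · have h2 : T < (tauP v t' 0 ω).toReal :=
              (ENNReal.ofReal_lt_iff_lt_toReal hT h).1 (not_le.1 hτ)
            have h3 := (hg1 (tauP v t' 0 ω) (Xat (tauP v t' 0 ω) ω)).2 h
            rw [stepf_of_gt h2] at h3
            exact h3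
      have hI := integral_le_indicator (M.P t' (some e)) zero_le_one
        (ae_of_all _ fun ω => (hg1 _ _).1) hbound
      rw [one_mul, GA.jumpLaw t' T e h0t h'] at hI
      have hexp : Real.exp (-K * (T - t')) ≤ Real.exp (∫ u in t'..T, GA.Lam u e e) :=
        Real.exp_le_exp.2 (intervalIntegral_ge_neg hKnn h' (fun u => GA.bdd u e e))
      rw [cKf_of_le h']
      linarith
    · -- past time T the integrand vanishes
      have hzero : (fun ω => g1 (tauP v t' 0 ω) (Xat (tauP v t' 0 ω) ω))
          = fun _ : CPath E => (0:ℝ) := by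
        funext ω
        rcases eq_or_ne (tauP v t' 0 ω) ∞ with h | h
        · rw [h, hg1inf]
        · have h2 : T < (tauP v t' 0 ω).toReal :=
            lt_of_lt_of_le h' ((ENNReal.ofReal_le_iff_le_toReal h).1 (tauP_ge v t' 0 ω))
          have h3 := (hg1 (tauP v t' 0 ω) (Xat (tauP v t' 0 ω) ω)).2 h
          rw [stepf_of_gt h2] at h3
          exact le_antisymm h3 (hg1 _ _).1
      rw [hzero, integral_zero, cKf_of_gt h']
  have hg2 : ∀ (t : ℝ≥0∞) (j : Option E),
      0 ≤ g2 t j ∧ (t ≠ ∞ → g2 t j ≤ cKf K T t.toReal) := by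
    intro t j
    have e1 : g2 t j = restrM v (applyAt M.P (fun r => tauP v r 0) g1) t j := rfl
    rcases restrM_cases v (applyAt M.P (fun r => tauP v r 0) g1) t j with h | ⟨e, hje, hve, ht, h⟩
    · rw [e1, h]
      exact ⟨le_refl 0, fun _ => cKf_nonneg hKnn _⟩
    · subst hje
      rw [e1, h]
      refine ⟨?_, fun _ => hF2 t e ht hve⟩
      have e2 : applyAt M.P (fun r => tauP v r 0) g1 t (some e)
          = ∫ ω, g1 (tauP v t.toReal 0 ω) (Xat (tauP v t.toReal 0 ω) ω)
              ∂ M.P t.toReal (some e) := by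
        unfold applyAt; rw [if_neg ht]
      rw [e2]
      haveI := hP t.toReal (some e)
      exact integral_nonneg fun ω => (hg1 _ _).1
  have hg2inf : ∀ j : Option E, g2 ∞ j = 0 := fun j => restrM_inf v _ j
  -- g3 = 𝒫⁻ g2
  set g3 := opM M.P v ℓ g2 with hg3def
  have hA3 := applyAt_bound M.P hP (fun r => tauM v r ℓ) (fun r ω => tauM_ge v r ℓ ω)
    g2 (cKf K T) (cKf_nonneg hKnn) (fun a b hab => cKf_antitone hKnn hab)
    (fun t j => (hg2 t j).1) (fun t j ht => (hg2 t j).2 ht) hg2inf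
  have hg3 : ∀ (t : ℝ≥0∞) (j : Option E),
      0 ≤ g3 t j ∧ (t ≠ ∞ → g3 t j ≤ cKf K T t.toReal) := by
    intro t j
    have e1 : g3 t j = restrM v (applyAt M.P (fun r => tauM v r ℓ) g2) t j := rfl
    rcases restrM_cases v (applyAt M.P (fun r => tauM v r ℓ) g2) t j with h | ⟨e, hje, hve, ht, h⟩
    · rw [e1, h]
      exact ⟨le_refl 0, fun _ => cKf_nonneg hKnn _⟩
    · subst hje
      rw [e1, h]
      exact hA3 t (some e)
  have hg3inf : ∀ j : Option E, g3 ∞ j = 0 := fun j => restrM_inf v _ j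
  -- the left-hand side as an integral
  have hLHS : opJM M.P v g3 (ENNReal.ofReal s) (some i)
      = ∫ ω, g3 (tauM v s 0 ω) (Xat (tauM v s 0 ω) ω) ∂ M.P s (some i) := by
    have e1 : opJM M.P v g3 (ENNReal.ofReal s) (some i)
        = if 0 < v (some i) ∧ (ENNReal.ofReal s ≠ ∞) then
            applyAt M.P (fun r => tauM v r 0) g3 (ENNReal.ofReal s) (some i) else 0 := rfl
    rw [e1, if_pos ⟨hi, ENNReal.ofReal_ne_top⟩]
    unfold applyAt
    rw [if_neg ENNReal.ofReal_ne_top, ENNReal.toReal_ofReal hs]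
  haveI := hP s (some i)
  rcases le_or_gt s T with hsT | hsT
  · -- main case
    have hbound : ∀ᵐ ω ∂ M.P s (some i),
        g3 (tauM v s 0 ω) (Xat (tauM v s 0 ω) ω)
          ≤ ({ω : CPath E | gammaJump s ω ≤ ENNReal.ofReal T}).indicator
              (fun _ => cKf K T s) ω := by
      filter_upwards [init_ae M hs (some i), reg_ae M hs (some i)] with ω hω1 hω2
      by_cases hωA : ω ∈ {ω : CPath E | gammaJump s ω ≤ ENNReal.ofReal T}
      · rw [Set.indicator_of_mem hωA]
        rcases eq_or_ne (tauM v s 0 ω) ∞ with h | h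
        · rw [h, hg3inf]
          exact cKf_nonneg hKnn _
        · refine ((hg3 _ _).2 h).trans (cKf_antitone hKnn ?_)
          exact (ENNReal.ofReal_le_iff_le_toReal h).1 (tauM_ge v s 0 ω)
      · rw [Set.indicator_of_notMem hωA]
        have hτ : ¬ tauM v s 0 ω ≤ ENNReal.ofReal T := fun hle =>
          hωA (gamma_le_of_tauM hs hT hω2 (by rw [hω1]; exact hi.le) hle)
        rcases eq_or_ne (tauM v s 0 ω) ∞ with h | h
        · rw [h, hg3inf]
        · have h2 : T < (tauM v s 0 ω).toReal :=
            (ENNReal.ofReal_lt_iff_lt_toReal hT h).1 (not_le.1 hτ)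
          have h3 := (hg3 (tauM v s 0 ω) (Xat (tauM v s 0 ω) ω)).2 h
          rw [cKf_of_gt h2] at h3
          exact h3
    have hI := integral_le_indicator (M.P s (some i)) (cKf_nonneg hKnn s)
      (ae_of_all _ fun ω => (hg3 _ _).1) hbound
    rw [GA.jumpLaw s T i hs hsT] at hI
    have hexp : Real.exp (-K * (T - s)) ≤ Real.exp (∫ u in s..T, GA.Lam u i i) :=
      Real.exp_le_exp.2 (intervalIntegral_ge_neg hKnn hsT (fun u => GA.bdd u i i))
    rw [hLHS, if_pos hsT]
    have hc : cKf K T s = 1 - Real.exp (-K * (T - s)) := cKf_of_le hsT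
    calc ∫ ω, g3 (tauM v s 0 ω) (Xat (tauM v s 0 ω) ω) ∂ M.P s (some i)
        ≤ cKf K T s * (1 - Real.exp (∫ u in s..T, GA.Lam u i i)) := hI
      _ ≤ cKf K T s * (1 - Real.exp (-K * (T - s))) :=
          mul_le_mul_of_nonneg_left (by linarith) (cKf_nonneg hKnn s)
      _ = (1 - Real.exp (-K * (T - s))) ^ 2 := by rw [hc]; ring
  · -- s > T : everything vanishes
    rw [hLHS, if_neg (not_le.2 hsT)]
    have hzero : (fun ω => g3 (tauM v s 0 ω) (Xat (tauM v s 0 ω) ω))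
        = fun _ : CPath E => (0:ℝ) := by
      funext ω
      rcases eq_or_ne (tauM v s 0 ω) ∞ with h | h
      · rw [h, hg3inf]
      · have h2 : T < (tauM v s 0 ω).toReal :=
          lt_of_lt_of_le hsT ((ENNReal.ofReal_le_iff_le_toReal h).1 (tauM_ge v s 0 ω))
        have h3 := (hg3 (tauM v s 0 ω) (Xat (tauM v s 0 ω) ω)).2 h
        rw [cKf_of_gt h2] at h3
        exact le_antisymm h3 (hg3 _ _).1
    rw [hzero, integral_zero]
end

section
/- For all 0 ≤ s ≤ T: if i ∈ E₋ then ℙ_{s,i}(τ₀⁺(s) ≤ T) ≤ 1 − e^{−K(T−s)}, and if i ∈ E₊ then ℙ_{s,i}(τ₀⁻(s) ≤ T) ≤ 1 − e^{−K(T−s)}. -/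
open MeasureTheory Set Filter
open scoped ENNReal

section Helpers

variable {E : Type*}

lemma cpath_const_before_jump (s r : ℝ) (ω : CPath E) (hr : s ≤ r)
    (hlt : ENNReal.ofReal r < gammaJump s ω) : ω r = ω s := by
  by_contra hne
  have hm : ENNReal.ofReal r ∈
      {t : ℝ≥0∞ | ∃ u : ℝ, s ≤ u ∧ t = ENNReal.ofReal u ∧ ω u ≠ ω s} := ⟨r, hr, rfl, hne⟩
  exact absurd (sInf_le hm) (not_le.mpr hlt)

lemma phi_const_before_jump (v : Option E → ℝ) (s u : ℝ) (hsu : s ≤ u) (ω : CPath E) (i : E)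
    (hωs : ω s = some i) (hγ : ENNReal.ofReal u < gammaJump s ω) :
    phi v s u ω = (u - s) * v (some i) := by
  unfold phi
  rw [intervalIntegral.integral_congr (g := fun _ => v (some i))
    (by
      intro r hr
      rw [Set.uIcc_of_le hsu] at hr
      have : ω r = ω s := cpath_const_before_jump s r ω hr.1
        (lt_of_le_of_lt (ENNReal.ofReal_le_ofReal hr.2) hγ)
      simp [this, hωs])]
  simp [smul_eq_mul]

lemma tauP_subset_gamma (v : Option E → ℝ) (s T : ℝ) (ω : CPath E) (i : E)
    (hvi : v (some i) < 0) (hωs : ω s = some i)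
    (h : tauP v s 0 ω ≤ ENNReal.ofReal T) : gammaJump s ω ≤ ENNReal.ofReal T := by
  by_contra h'
  push_neg at h'
  obtain ⟨T', hT1, hT2⟩ := exists_between h'
  have hlt : tauP v s 0 ω < T' := lt_of_le_of_lt h hT1
  obtain ⟨a, ⟨u, hsu, rfl, hφ⟩, ha⟩ := sInf_lt_iff.mp hlt
  rw [phi_const_before_jump v s u hsu ω i hωs (lt_of_lt_of_le (lt_of_lt_of_le ha hT2.le) le_rfl)] at hφ
  nlinarith

lemma tauM_subset_gamma (v : Option E → ℝ) (s T : ℝ) (ω : CPath E) (i : E)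
    (hvi : 0 < v (some i)) (hωs : ω s = some i)
    (h : tauM v s 0 ω ≤ ENNReal.ofReal T) : gammaJump s ω ≤ ENNReal.ofReal T := by
  by_contra h'
  push_neg at h'
  obtain ⟨T', hT1, hT2⟩ := exists_between h'
  have hlt : tauM v s 0 ω < T' := lt_of_le_of_lt h hT1
  obtain ⟨a, ⟨u, hsu, rfl, hφ⟩, ha⟩ := sInf_lt_iff.mp hlt
  rw [phi_const_before_jump v s u hsu ω i hωs (lt_of_lt_of_le ha hT2.le)] at hφ
  nlinarith

end Helpers

/-- (Estimate (4.3).) For `0 ≤ s ≤ T`: if `i ∈ E₋` then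
`ℙ_{s,i}(τ₀⁺(s) ≤ T) ≤ 1 - e^{-K(T-s)}`, and if `i ∈ E₊` then
`ℙ_{s,i}(τ₀⁻(s) ≤ T) ≤ 1 - e^{-K(T-s)}`. -/
theorem passage_probability_bound
    {E : Type*} [Fintype E] (hcard : 1 < Fintype.card E) (v : Option E → ℝ)
    (hv : ∀ e : E, v (some e) ≠ 0) (hv0 : v none = 0)
    (hEp : ∃ e : E, 0 < v (some e)) (hEm : ∃ e : E, v (some e) < 0)
    (M : MarkovFamily E v) (K : ℝ) (GA : GenAssumption E v M K)
    (s T : ℝ) (hs : 0 ≤ s) (hsT : s ≤ T) (i : E) :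
    (v (some i) < 0 →
      (M.P s (some i) {ω | tauP v s 0 ω ≤ ENNReal.ofReal T}).toReal
        ≤ 1 - Real.exp (-K * (T - s))) ∧
    (0 < v (some i) →
      (M.P s (some i) {ω | tauM v s 0 ω ≤ ENNReal.ofReal T}).toReal
        ≤ 1 - Real.exp (-K * (T - s))) := by
  
  have hμ := M.prob s (some i)
  have hBmeas : MeasurableSet {ω : CPath E | ω s = some i} := by
    have h : {ω : CPath E | ω s = some i} = (fun ω : CPath E => ω s) ⁻¹' {some i} := rfl
    rw [h]
    exact measurable_pi_apply s trivial
  have hBc : M.P s (some i) {ω : CPath E | ω s = some i}ᶜ = 0 := by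
    rw [measure_compl hBmeas (measure_ne_top _ _), M.init s (some i) hs, measure_univ]
    simp
  have key : ∀ A : Set (CPath E),
      (A ∩ {ω | ω s = some i} ⊆ {ω | gammaJump s ω ≤ ENNReal.ofReal T}) →
      (M.P s (some i) A).toReal ≤ 1 - Real.exp (-K * (T - s)) := by
    intro A hsub
    have h1 : M.P s (some i) A ≤ M.P s (some i) {ω | gammaJump s ω ≤ ENNReal.ofReal T} := by
      calc M.P s (some i) A
          ≤ M.P s (some i)
            ({ω | gammaJump s ω ≤ ENNReal.ofReal T} ∪ {ω : CPath E | ω s = some i}ᶜ) := by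
            refine measure_mono ?_
            intro ω hω
            by_cases hb : ω s = some i
            · exact Or.inl (hsub ⟨hω, hb⟩)
            · exact Or.inr hb
        _ ≤ _ + _ := measure_union_le _ _
        _ = _ := by rw [hBc, add_zero]
    have h2 := ENNReal.toReal_mono (measure_ne_top _ _) h1
    rw [GA.jumpLaw s T i hs hsT] at h2
    refine h2.trans ?_
    have h3 : -K * (T - s) ≤ ∫ u in s..T, GA.Lam u i i := by
      by_cases hI : IntervalIntegrable (fun u => GA.Lam u i i) MeasureTheory.volume s T
      · have hm : ∫ u in s..T, (-K : ℝ) ≤ ∫ u in s..T, GA.Lam u i i :=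
          intervalIntegral.integral_mono_on hsT intervalIntegrable_const hI
            (fun u _ => (abs_le.mp (GA.bdd u i i)).1)
        rw [intervalIntegral.integral_const] at hm
        simp only [smul_eq_mul] at hm
        linarith
      · rw [intervalIntegral.integral_undef hI]
        nlinarith [GA.hK]
    have h4 := Real.exp_le_exp.mpr h3
    linarith
  constructor
  · intro hvi
    exact key _ (fun ω hω => tauP_subset_gamma v s T ω i hvi hω.2 hω.1)
  · intro hvi
    exact key _ (fun ω hω => tauM_subset_gamma v s T ω i hvi hω.2 hω.1)
end

section
/- Let T ∈ ℝ₊ and let g⁺ ∈ B_b(X̄₊) be given by g⁺(t,j) := 1_{[0,T]}(t). Then for every ℓ⁺, ℓ⁻ ≥ 0 and every (s,i) ∈ ℝ₊ × E₋, 0 ≤ (J⁺ 𝒫⁺_{ℓ⁻+ℓ⁺} g⁺)(s,i) ≤ 1_{[0,T]}(s)·(1 − e^{−K(T−s)}). -/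
open MeasureTheory Set Filter
open scoped ENNReal

section AuxLemmas

variable {E : Type*}

lemma indTP_nonneg (v : Option E → ℝ) (T : ℝ) (t : ℝ≥0∞) (j : Option E) :
    0 ≤ indTP v T t j := by
  cases j <;> simp only [indTP]
  · exact le_refl 0
  · split <;> norm_num

lemma indTP_le_one (v : Option E → ℝ) (T : ℝ) (t : ℝ≥0∞) (j : Option E) :
    indTP v T t j ≤ 1 := by
  cases j <;> simp only [indTP]
  · norm_num
  · split <;> norm_num

lemma indTP_eq_zero (v : Option E → ℝ) (T : ℝ) (t : ℝ≥0∞) (j : Option E)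
    (h : t = ∞ ∨ T < t.toReal) : indTP v T t j = 0 := by
  cases j <;> simp only [indTP]
  rw [if_neg]
  rintro ⟨-, h1, h2⟩
  rcases h with h | h
  · exact h1 h
  · exact absurd h2 (not_le.mpr h)

lemma opP_nonneg (P : ℝ → Option E → Measure (CPath E)) (v : Option E → ℝ) (ℓ T : ℝ)
    (t : ℝ≥0∞) (j : Option E) : 0 ≤ opP P v ℓ (indTP v T) t j := by
  cases j <;> simp only [opP, restrP]
  · exact le_refl 0
  · split
    · simp only [applyAt]
      split
      · exact le_refl 0
      · exact integral_nonneg fun ω => indTP_nonneg v T _ _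
    · exact le_refl 0

lemma opP_le_one (P : ℝ → Option E → Measure (CPath E)) (v : Option E → ℝ) (ℓ T : ℝ)
    [∀ s j, IsProbabilityMeasure (P s j)]
    (t : ℝ≥0∞) (j : Option E) : opP P v ℓ (indTP v T) t j ≤ 1 := by
  cases j <;> simp only [opP, restrP]
  · norm_num
  · split
    · simp only [applyAt]
      split
      · norm_num
      · set μ := P t.toReal _
        by_cases hint : Integrable
            (fun ω => indTP v T (tauP v t.toReal ℓ ω) (Xat (tauP v t.toReal ℓ ω) ω)) μ
        · calc ∫ ω, indTP v T (tauP v t.toReal ℓ ω) (Xat (tauP v t.toReal ℓ ω) ω) ∂μ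
              ≤ ∫ _ω, (1 : ℝ) ∂μ :=
              integral_mono hint (integrable_const 1) fun ω => indTP_le_one v T _ _
          _ ≤ 1 := by simp
        · rw [integral_undef hint]; norm_num
    · norm_num

lemma opP_eq_zero (P : ℝ → Option E → Measure (CPath E)) (v : Option E → ℝ) (ℓ T : ℝ)
    (t : ℝ≥0∞) (j : Option E) (h : t = ∞ ∨ T < t.toReal) :
    opP P v ℓ (indTP v T) t j = 0 := by
  cases j <;> simp only [opP, restrP]
  split
  · rename_i hcond
    simp only [applyAt]
    split
    · rfl
    · rename_i hne
      have hzero : (fun ω => indTP v T (tauP v t.toReal ℓ ω) (Xat (tauP v t.toReal ℓ ω) ω))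
          = fun _ => (0 : ℝ) := by
        funext ω
        apply indTP_eq_zero
        by_cases hτ : tauP v t.toReal ℓ ω = ∞
        · exact Or.inl hτ
        · right
          rcases h with h | h
          · exact absurd h hne
          · refine lt_of_lt_of_le h ?_
            have h1 : ENNReal.ofReal t.toReal ≤ tauP v t.toReal ℓ ω := tauP_ge v _ _ ω
            rw [ENNReal.ofReal_toReal hne] at h1
            exact ENNReal.toReal_mono hτ h1
      rw [hzero, integral_zero]
  · rfl

lemma gammaJump_le_tauP (v : Option E → ℝ) (s : ℝ) (i : E) (hi : v (some i) < 0)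
    (ω : CPath E) (hω : ω s = some i) : gammaJump s ω ≤ tauP v s 0 ω := by
  refine le_sInf ?_
  rintro t ⟨u, hu, rfl, hphi⟩
  by_contra hlt
  push_neg at hlt
  -- hlt : ENNReal.ofReal u < gammaJump s ω
  have hconst : ∀ x ∈ Set.Icc s u, ω x = ω s := by
    intro x hx
    by_contra hne
    have : gammaJump s ω ≤ ENNReal.ofReal x :=
      sInf_le ⟨x, hx.1, rfl, hne⟩
    exact absurd (this.trans (ENNReal.ofReal_le_ofReal hx.2)) (not_le.mpr hlt)
  have hphi' : phi v s u ω = (u - s) * v (some i) := by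
    unfold phi
    rw [intervalIntegral.integral_congr (g := fun _ => v (some i))
      (fun x hx => by rw [Set.uIcc_of_le hu] at hx; rw [hconst x hx, hω])]
    simp [smul_eq_mul]
  rw [hphi'] at hphi
  have : (u - s) * v (some i) ≤ 0 :=
    mul_nonpos_of_nonneg_of_nonpos (by linarith) hi.le
  linarith

end AuxLemmas

/-- (Estimate (4.5).) For `g⁺(t,j) = 1_{[0,T]}(t)` and `(s,i) ∈ ℝ₊ × E₋`:
`0 ≤ (J⁺ 𝒫⁺_{ℓ⁻+ℓ⁺} g⁺)(s,i) ≤ 1_{[0,T]}(s) (1 - e^{-K(T-s)})`. -/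
theorem J_plus_P_plus_indicator_bound
    {E : Type*} [Fintype E] (hcard : 1 < Fintype.card E) (v : Option E → ℝ)
    (hv : ∀ e : E, v (some e) ≠ 0) (hv0 : v none = 0)
    (hEp : ∃ e : E, 0 < v (some e)) (hEm : ∃ e : E, v (some e) < 0)
    (M : MarkovFamily E v) (K : ℝ) (GA : GenAssumption E v M K)
    (T : ℝ) (hT : 0 ≤ T)
    (ℓm ℓp : ℝ) (hℓm : 0 ≤ ℓm) (hℓp : 0 ≤ ℓp)
    (s : ℝ) (hs : 0 ≤ s) (i : E) (hi : v (some i) < 0) :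
    0 ≤ opJP M.P v (opP M.P v (ℓm + ℓp) (indTP v T)) (ENNReal.ofReal s) (some i) ∧
    opJP M.P v (opP M.P v (ℓm + ℓp) (indTP v T)) (ENNReal.ofReal s) (some i)
      ≤ if s ≤ T then 1 - Real.exp (-K * (T - s)) else 0 := by
  classical
  haveI : ∀ s j, IsProbabilityMeasure (M.P s j) := M.prob
  have hsne : (ENNReal.ofReal s) ≠ ∞ := ENNReal.ofReal_ne_top
  have hst : (ENNReal.ofReal s).toReal = s := ENNReal.toReal_ofReal hs
  set g := opP M.P v (ℓm + ℓp) (indTP v T) with hg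
  set μ := M.P s (some i) with hμ
  have hLHS : opJP M.P v g (ENNReal.ofReal s) (some i)
      = ∫ ω, g (tauP v s 0 ω) (Xat (tauP v s 0 ω) ω) ∂ μ := by
    simp only [opJP, restrM, applyAt, if_neg hsne, if_pos (And.intro hi hsne), hst, hμ]
  have hnonneg : 0 ≤ ∫ ω, g (tauP v s 0 ω) (Xat (tauP v s 0 ω) ω) ∂ μ :=
    integral_nonneg fun ω => opP_nonneg M.P v _ T _ _
  refine ⟨hLHS ▸ hnonneg, ?_⟩
  rw [hLHS]
  by_cases hsT : s ≤ T
  · rw [if_pos hsT]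
    set B : Set (CPath E) := {ω | gammaJump s ω ≤ ENNReal.ofReal T} with hB
    set A : Set (CPath E) := {ω | ω s = some i} with hA
    have hAmeas : MeasurableSet A := by
      have : A = (fun ω : CPath E => ω s) ⁻¹' {some i} := rfl
      rw [this]
      exact (measurable_pi_apply s) trivial
    have hμA : μ A = 1 := M.init s (some i) hs
    have hμAc : μ Aᶜ = 0 := by
      rw [measure_compl hAmeas (measure_ne_top μ A), hμA, measure_univ, tsub_self]
    -- pointwise bound off B ∪ Aᶜ
    have key : ENNReal.ofReal (∫ ω, g (tauP v s 0 ω) (Xat (tauP v s 0 ω) ω) ∂ μ)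
        ≤ μ (B ∪ Aᶜ) := by
      refine integral_le_measure (fun ω _ => opP_le_one M.P v _ T _ _) ?_
      intro ω hω
      simp only [Set.mem_compl_iff, Set.mem_union, not_or, not_not] at hω
      obtain ⟨hωB, hωA⟩ := hω
      refine le_of_eq (opP_eq_zero M.P v _ T _ _ ?_)
      by_cases hτ : tauP v s 0 ω = ∞
      · exact Or.inl hτ
      · right
        by_contra hτT
        push_neg at hτT
        have hle : tauP v s 0 ω ≤ ENNReal.ofReal T :=
          (ENNReal.le_ofReal_iff_toReal_le hτ hT).mpr hτT
        have : gammaJump s ω ≤ ENNReal.ofReal T :=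
          (gammaJump_le_tauP v s i hi ω hωA).trans hle
        exact hωB this
    have hμBA : μ (B ∪ Aᶜ) ≤ μ B := by
      calc μ (B ∪ Aᶜ) ≤ μ B + μ Aᶜ := measure_union_le _ _
        _ = μ B := by rw [hμAc, add_zero]
    have hfin : (∫ ω, g (tauP v s 0 ω) (Xat (tauP v s 0 ω) ω) ∂ μ) ≤ (μ B).toReal := by
      have h1 := (key.trans hμBA)
      have h2 := ENNReal.toReal_mono (measure_ne_top μ B) h1
      rwa [ENNReal.toReal_ofReal hnonneg] at h2
    refine hfin.trans ?_
    have hJL : (μ B).toReal = 1 - Real.exp (∫ u in s..T, GA.Lam u i i) :=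
      GA.jumpLaw s T i hs hsT
    rw [hJL]
    have hint : -K * (T - s) ≤ ∫ u in s..T, GA.Lam u i i := by
      by_cases hI : IntervalIntegrable (fun u => GA.Lam u i i) MeasureTheory.volume s T
      · have hmono : ∫ u in s..T, (-K : ℝ) ≤ ∫ u in s..T, GA.Lam u i i :=
          intervalIntegral.integral_mono_on hsT (intervalIntegrable_const) hI
            (fun u _ => (abs_le.mp (GA.bdd u i i)).1)
        rw [intervalIntegral.integral_const, smul_eq_mul] at hmono
        linarith
      · rw [intervalIntegral.integral_undef hI]
        have h1 : 0 ≤ T - s := by linarith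
        nlinarith [GA.hK]
    have := Real.exp_le_exp.mpr hint
    linarith
  · rw [if_neg hsT]
    push_neg at hsT
    have hzero : (fun ω => g (tauP v s 0 ω) (Xat (tauP v s 0 ω) ω)) = fun _ => (0 : ℝ) := by
      funext ω
      refine opP_eq_zero M.P v _ T _ _ ?_
      by_cases hτ : tauP v s 0 ω = ∞
      · exact Or.inl hτ
      · right
        have h1 : ENNReal.ofReal s ≤ tauP v s 0 ω := tauP_ge v s 0 ω
        have h2 : s ≤ (tauP v s 0 ω).toReal := by
          have := ENNReal.toReal_mono hτ h1
          rwa [hst] at this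
        linarith
    rw [hzero, integral_zero]
end
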